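/- arXiv:1003.1797 — 6 statements merged into one kernel-verified Lean document; each statement's English description precedes it below -/
import Mathlib

section
/- Let X and Y be finite-dimensional indecomposable Λ-modules. Then ΛG ⊗_Λ X ≅ ΛG ⊗_Λ Y as ΛG-modules if and only if Y ≅ {}^{g}X as Λ-modules for some g ∈ G. -/
/-! Common framework: twisted modules, skew group algebras (characterized by their
universal basis property), restriction of scalars, coset sums, indecomposability. -/

noncomputable section

section Framework

variable {k Λ G A : Type} [Field k] [Ring Λ] [Algebra k Λ] [Group G]

/-- The twisted module `{}^{g}X` : the same underlying abelian group as `X`, with the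
`Λ`-action `a · x = (φ g)⁻¹ (a) • x`. -/
def Twisted (_φ : G →* (Λ ≃ₐ[k] Λ)) (_g : G) (X : Type) : Type := X

instance Twisted.instAddCommGroup (φ : G →* (Λ ≃ₐ[k] Λ)) (g : G) (X : Type) [AddCommGroup X] :
    AddCommGroup (Twisted φ g X) := inferInstanceAs (AddCommGroup X)

instance Twisted.instModule (φ : G →* (Λ ≃ₐ[k] Λ)) (g : G) (X : Type) [AddCommGroup X]
    [Module Λ X] : Module Λ (Twisted φ g X) :=
  Module.compHom X ((φ g⁻¹).toAlgHom.toRingHom)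

/-- A module over another ring `A`, viewed as a `Λ`-module through a map `ι : Λ →ₐ[k] A`
(restriction of scalars). -/
def Res {A : Type} [Ring A] [Algebra k A] (_ι : Λ →ₐ[k] A) (M : Type) : Type := M

instance Res.instAddCommGroup {A : Type} [Ring A] [Algebra k A] (ι : Λ →ₐ[k] A) (M : Type)
    [AddCommGroup M] : AddCommGroup (Res ι M) := inferInstanceAs (AddCommGroup M)

instance Res.instModule {A : Type} [Ring A] [Algebra k A] (ι : Λ →ₐ[k] A) (M : Type)
    [AddCommGroup M] [Module A M] : Module Λ (Res ι M) :=
  Module.compHom M ι.toRingHom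

/-- `A`, together with an embedding `ι : Λ → A` and units `u g` (`g ∈ G`), is a realization of
the skew group algebra `ΛG`:  multiplication satisfies `g a · h b = g h · h⁻¹(a) b`
(equivalently the commutation rule below), and `A` is free as a left `Λ`-module with
basis `{u g ∣ g ∈ G}`. -/
structure IsSkewGroupAlgebra (φ : G →* (Λ ≃ₐ[k] Λ)) (A : Type) [Ring A] [Algebra k A]
    (ι : Λ →ₐ[k] A) (u : G →* Aˣ) : Prop where
  skew_comm : ∀ (g : G) (a : Λ), (u g : A) * ι a = ι (φ g a) * (u g : A)
  free : ∀ x : A, ∃! c : G →₀ Λ, x = c.sum fun g a => (u g : A) * ι a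

/-- `X` is a `g`-invariant module: `{}^{g}X ≅ X`. -/
def IsGInvariantAt (φ : G →* (Λ ≃ₐ[k] Λ)) (g : G) (X : Type) [AddCommGroup X] [Module Λ X] :
    Prop := Nonempty (Twisted φ g X ≃ₗ[Λ] X)

/-- `X` is a `G`-invariant module: `{}^{g}X ≅ X` for all `g ∈ G`. -/
def IsGInvariant (φ : G →* (Λ ≃ₐ[k] Λ)) (X : Type) [AddCommGroup X] [Module Λ X] : Prop :=
  ∀ g : G, IsGInvariantAt φ g X

/-- The set `H_X = {g ∈ G ∣ {}^{g}X ≅ X}` (a subgroup of `G`). -/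
def Hset (φ : G →* (Λ ≃ₐ[k] Λ)) (X : Type) [AddCommGroup X] [Module Λ X] : Set G :=
  {g : G | IsGInvariantAt φ g X}

/-- `T` is a complete set of left coset representatives for `H` in `G`. -/
def IsLeftTransversal {G : Type} [Group G] (H T : Set G) : Prop :=
  ∀ g : G, ∃! t : G, t ∈ T ∧ t⁻¹ * g ∈ H

/-- The direct sum `⊕_{t ∈ T} {}^{t}X`. -/
def CosetSum (φ : G →* (Λ ≃ₐ[k] Λ)) (T : Set G) (X : Type) : Type :=
  ∀ t : T, Twisted φ (t : G) X

instance CosetSum.instAddCommGroup (φ : G →* (Λ ≃ₐ[k] Λ)) (T : Set G) (X : Type)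
    [AddCommGroup X] : AddCommGroup (CosetSum φ T X) :=
  inferInstanceAs (AddCommGroup (∀ t : T, Twisted φ (t : G) X))

instance CosetSum.instModule (φ : G →* (Λ ≃ₐ[k] Λ)) (T : Set G) (X : Type)
    [AddCommGroup X] [Module Λ X] : Module Λ (CosetSum φ T X) :=
  inferInstanceAs (Module Λ (∀ t : T, Twisted φ (t : G) X))

/-- The direct sum `⊕_{g ∈ G} {}^{g}X`. -/
def GSum (φ : G →* (Λ ≃ₐ[k] Λ)) (X : Type) : Type := ∀ g : G, Twisted φ g X

instance GSum.instAddCommGroup (φ : G →* (Λ ≃ₐ[k] Λ)) (X : Type) [AddCommGroup X] :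
    AddCommGroup (GSum φ X) := inferInstanceAs (AddCommGroup (∀ g : G, Twisted φ g X))

instance GSum.instModule (φ : G →* (Λ ≃ₐ[k] Λ)) (X : Type) [AddCommGroup X] [Module Λ X] :
    Module Λ (GSum φ X) := inferInstanceAs (Module Λ (∀ g : G, Twisted φ g X))

end Framework

/-- A module is indecomposable: it is nonzero and is not the direct sum of two nonzero
submodules. -/
def IsIndec (R X : Type) [Ring R] [AddCommGroup X] [Module R X] : Prop :=
  Nontrivial X ∧ ∀ p q : Submodule R X, IsCompl p q → p = ⊥ ∨ q = ⊥

/-- `X` is an indecomposable `G`-invariant module: it is nonzero, `G`-invariant, and does not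
decompose as a direct sum of two nonzero `G`-invariant modules. -/
def IsIndecGInvariant {k Λ G : Type} [Field k] [Ring Λ] [Algebra k Λ] [Group G]
    (φ : G →* (Λ ≃ₐ[k] Λ)) (X : Type) [AddCommGroup X] [Module Λ X] : Prop :=
  Nontrivial X ∧ IsGInvariant φ X ∧
    ∀ p q : Submodule Λ X, IsCompl p q →
      IsGInvariant φ p → IsGInvariant φ q → p = ⊥ ∨ q = ⊥

/-- `(M, θ)` is the module obtained from `X` by induction (extension of scalars) along the
ring homomorphism `j : R → S` : i.e. `θ : X → M` is `j`-semilinear and universal among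
`j`-semilinear maps from `X` to `S`-modules.  For `j : Λ → ΛG` this characterizes
`ΛG ⊗_Λ X` together with the canonical map `x ↦ 1 ⊗ x`. -/
structure IsInducedAlong {R S : Type} [Ring R] [Ring S] (j : R →+* S)
    (X : Type) [AddCommGroup X] [Module R X]
    (M : Type) [AddCommGroup M] [Module S M] (θ : X →+ M) : Prop where
  semilinear : ∀ (r : R) (x : X), θ (r • x) = j r • θ x
  universal : ∀ (N : Type) [AddCommGroup N] [Module S N] (f : X →+ N),
      (∀ (r : R) (x : X), f (r • x) = j r • f x) →
      ∃! F : M →ₗ[S] N, ∀ x : X, F (θ x) = f x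

/-- An isomorphism of modules, with the two module structures given explicitly (used when the
same underlying type carries two different module structures). -/
def ModIso (R : Type) [Semiring R] (M N : Type) [AddCommMonoid M] [AddCommMonoid N]
    (mM : Module R M) (mN : Module R N) : Prop :=
  Nonempty (@LinearEquiv R R _ _ (RingHom.id R) (RingHom.id R) RingHomInvPair.ids
    RingHomInvPair.ids M N _ _ mM mN)

/-- The scalar action of an explicitly given module structure. -/
def msmul {R M : Type} [Semiring R] [AddCommMonoid M] (m : Module R M) (r : R) (x : M) : M :=
  letI := m; r • x

/-- `X'` realizes the `ΛH`-module `ρ ⊗_k X` for the one-dimensional representation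
(character) `χ` of `H`: there is an additive isomorphism `e : X' → X` (`l₀ ⊗ x ↦ x`)
commuting with the `Λ`-action, and transforming the action of `h ∈ H` by the scalar `χ h`. -/
def IsCharTwist {k Λ H B : Type} [Field k] [Ring Λ] [Algebra k Λ] [Group H]
    [Ring B] [Algebra k B] (ιB : Λ →ₐ[k] B) (uB : H →* Bˣ) (χ : H →* kˣ)
    (X X' : Type) [AddCommGroup X] [Module B X] [AddCommGroup X'] [Module B X'] : Prop :=
  ∃ e : X' ≃+ X, (∀ (a : Λ) (x : X'), e (ιB a • x) = ιB a • e x) ∧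
    ∀ (h : H) (x : X'), e (uB h • x) = algebraMap k B (χ h : k) • (uB h • e x)

end

/-!
Restricted to `Λ`, the induced module `ΛG ⊗_Λ X` is `⊕_{g ∈ G} {}^{g}X`, the summand `{}^{g}X`
being `u_g ⊗ X`; the projection onto `1 ⊗ X` comes from the universal property, applied to the
coinduced module `Hom_Λ(ΛG, X)`. An isomorphism `ΛG ⊗_Λ X ≅ ΛG ⊗_Λ Y` therefore makes `Y`, a
direct summand of its own induced module, a direct summand of `⊕_g {}^{g}X`. As `Y` has finite
length and is indecomposable, its endomorphism ring is local (Fitting's lemma), so `Y` is already a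
direct summand of a single `{}^{g}X`; this one is indecomposable too, hence `Y ≅ {}^{g}X`.
Conversely `x ↦ u_g ⊗ x` identifies `ΛG ⊗_Λ X` with the induced module of `{}^{g}X`.
-/

noncomputable section

namespace IsIndec

variable {R Y Z : Type} [Ring R] [AddCommGroup Y] [Module R Y] [AddCommGroup Z] [Module R Z]

theorem of_linearEquiv {S N : Type} [Ring S] [AddCommGroup N] [Module S N] {σ : R →+* S}
    {σ' : S →+* R} [RingHomInvPair σ σ'] [RingHomInvPair σ' σ] (e : Y ≃ₛₗ[σ] N)
    (hY : IsIndec R Y) : IsIndec S N := by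
  have : Nontrivial Y := hY.1
  let o := Submodule.orderIsoMapComap e
  refine ⟨e.symm.toEquiv.nontrivial, fun p q hpq => ?_⟩
  simpa only [OrderIso.symm_apply_eq, map_bot] using hY.2 _ _ (o.symm.isCompl hpq)

theorem isUnit_or_isNilpotent [IsArtinian R Y] [IsNoetherian R Y] (hY : IsIndec R Y)
    (f : Module.End R Y) : IsUnit f ∨ IsNilpotent f := by
  obtain ⟨n, hn⟩ := Filter.eventually_atTop.mp f.eventually_isCompl_ker_pow_range_pow
  rcases hY.2 _ _ (hn (n + 1) n.le_succ) with hker | hrange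
  · left
    have hinj : Function.Injective (f ^ (n + 1)) := LinearMap.ker_eq_bot.mp hker
    exact (isUnit_pow_iff n.succ_ne_zero).mp <| (Module.End.isUnit_iff _).mpr
      (IsArtinian.bijective_of_injective_endomorphism _ hinj)
  · exact .inr ⟨n + 1, LinearMap.range_eq_bot.mp hrange⟩

theorem isLocalRing_end [IsArtinian R Y] [IsNoetherian R Y] (hY : IsIndec R Y) :
    IsLocalRing (Module.End R Y) := by
  have : Nontrivial Y := hY.1
  refine .of_isUnit_or_isUnit_one_sub_self fun f => ?_
  exact (hY.isUnit_or_isNilpotent f).imp_right fun h => h.isUnit_one_sub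

theorem nonempty_linearEquiv_of_retract [Nontrivial Y] (hZ : IsIndec R Z)
    (v : Y →ₗ[R] Z) (r : Z →ₗ[R] Y) (hrv : r ∘ₗ v = LinearMap.id) :
    Nonempty (Y ≃ₗ[R] Z) := by
  have hrv' (y : Y) : r (v y) = y := LinearMap.congr_fun hrv y
  have hidem : IsIdempotentElem (v ∘ₗ r) := by
    ext z
    exact congr_arg v (hrv' (r z))
  rcases hZ.2 _ _ (LinearMap.IsIdempotentElem.isCompl hidem) with hrange | hker
  · obtain ⟨y, hy⟩ := exists_ne (0 : Y)
    have hvr : v ∘ₗ r = 0 := LinearMap.range_eq_bot.mp hrange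
    refine absurd ?_ hy
    calc y = r ((v ∘ₗ r) (v y)) := by rw [LinearMap.comp_apply, hrv', hrv']
      _ = 0 := by rw [hvr, LinearMap.zero_apply, map_zero]
  · have hinj : Function.Injective r := fun z z' h => LinearMap.ker_eq_bot.mp hker (by
      simp only [LinearMap.comp_apply, h])
    have hsurj : Function.Surjective r := fun y => ⟨v y, hrv' y⟩
    exact ⟨(LinearEquiv.ofBijective r ⟨hinj, hsurj⟩).symm⟩

theorem exists_linearEquiv_of_retract_pi [IsArtinian R Y] [IsNoetherian R Y]
    (hY : IsIndec R Y) {ι : Type} [Fintype ι] [DecidableEq ι] {Z : ι → Type}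
    [∀ i, AddCommGroup (Z i)] [∀ i, Module R (Z i)] (hZ : ∀ i, IsIndec R (Z i))
    (s : Y →ₗ[R] ∀ i, Z i) (p : (∀ i, Z i) →ₗ[R] Y) (hps : p ∘ₗ s = LinearMap.id) :
    ∃ i, Nonempty (Y ≃ₗ[R] Z i) := by
  have : Nontrivial Y := hY.1
  have hsum : ∑ i, (p ∘ₗ LinearMap.single R Z i) ∘ₗ (LinearMap.proj i ∘ₗ s) = 1 := by
    ext y
    simp only [LinearMap.sum_apply, LinearMap.comp_apply, LinearMap.coe_proj,
      Function.eval, LinearMap.coe_single, ← map_sum, Finset.univ_sum_single]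
    exact LinearMap.congr_fun hps y
  have := hY.isLocalRing_end
  obtain ⟨i, -, ⟨w, hw⟩⟩ := IsLocalRing.exists_of_isUnit_sum (hsum ▸ isUnit_one)
  refine ⟨i, (hZ i).nonempty_linearEquiv_of_retract (LinearMap.proj i ∘ₗ s)
    (↑w⁻¹ ∘ₗ p ∘ₗ LinearMap.single R Z i) ?_⟩
  change ↑w⁻¹ * ((p ∘ₗ LinearMap.single R Z i) ∘ₗ LinearMap.proj i ∘ₗ s) = 1
  rw [← hw, w.inv_mul]

end IsIndec

section Twisted

variable {k Λ G : Type} [Field k] [Ring Λ] [Algebra k Λ] [Group G] (φ : G →* (Λ ≃ₐ[k] Λ)) (g : G)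
  {X : Type} [AddCommGroup X]

variable (X) in
def Twisted.equiv : X ≃+ Twisted φ g X :=
  AddEquiv.refl X

variable [Module Λ X]

theorem Twisted.equiv_smul (a : Λ) (x : X) :
    Twisted.equiv φ g X (a • x) = φ g a • Twisted.equiv φ g X x := by
  change a • x = φ g⁻¹ (φ g a) • x
  rw [map_inv, AlgEquiv.aut_inv, AlgEquiv.symm_apply_apply]

theorem Twisted.equiv_symm_smul (a : Λ) (x : Twisted φ g X) :
    (Twisted.equiv φ g X).symm (a • x) = φ g⁻¹ a • (Twisted.equiv φ g X).symm x :=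
  rfl

theorem IsIndec.twisted (hX : IsIndec Λ X) : IsIndec Λ (Twisted φ g X) := by
  let σ : Λ ≃+* Λ := (φ g).toRingEquiv
  have := RingHomInvPair.of_ringEquiv σ
  have := RingHomInvPair.of_ringEquiv_symm σ
  exact hX.of_linearEquiv (σ' := (σ.symm : Λ →+* Λ))
    (show X ≃ₛₗ[(σ : Λ →+* Λ)] Twisted φ g X from
      { Twisted.equiv φ g X with map_smul' := Twisted.equiv_smul φ g })

end Twisted

namespace IsInducedAlong

variable {R S X M : Type} [Ring R] [Ring S] {j : R →+* S} [AddCommGroup X] [Module R X]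
  [AddCommGroup M] [Module S M] {θ : X →+ M}

def lift (hM : IsInducedAlong j X M θ) {N : Type} [AddCommGroup N] [Module S N] (f : X →+ N)
    (hf : ∀ (r : R) (x : X), f (r • x) = j r • f x) : M →ₗ[S] N :=
  (hM.universal N f hf).exists.choose

@[simp]
theorem lift_apply (hM : IsInducedAlong j X M θ) {N : Type} [AddCommGroup N] [Module S N]
    (f : X →+ N) (hf : ∀ (r : R) (x : X), f (r • x) = j r • f x) (x : X) :
    hM.lift f hf (θ x) = f x :=
  (hM.universal N f hf).exists.choose_spec x

theorem linearMap_ext (hM : IsInducedAlong j X M θ) {N : Type} [AddCommGroup N] [Module S N]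
    {F₁ F₂ : M →ₗ[S] N} (h : ∀ x, F₁ (θ x) = F₂ (θ x)) : F₁ = F₂ :=
  (hM.universal N (F₂.toAddMonoidHom.comp θ) fun r x => by simp [hM.semilinear]).unique h
    fun _ => rfl

theorem comp_linearEquiv (hM : IsInducedAlong j X M θ) {Y : Type} [AddCommGroup Y]
    [Module R Y] (e : Y ≃ₗ[R] X) : IsInducedAlong j Y M (θ.comp e.toAddMonoidHom) where
  semilinear r y := by simp [hM.semilinear]
  universal N _ _ f hf := by
    have hf' (r : R) (x : X) : f.comp e.symm.toAddMonoidHom (r • x) =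
        j r • f.comp e.symm.toAddMonoidHom x := by simp [hf]
    refine ⟨hM.lift _ hf', fun y => by simp, fun F hF => hM.linearMap_ext fun x => ?_⟩
    simpa using hF (e.symm x)

theorem nonempty_linearEquiv (hM : IsInducedAlong j X M θ) {M' : Type} [AddCommGroup M']
    [Module S M'] {θ' : X →+ M'} (hM' : IsInducedAlong j X M' θ') : Nonempty (M ≃ₗ[S] M') :=
  ⟨.ofLinearMap (hM.lift θ' hM'.semilinear) (hM'.lift θ hM.semilinear)
    (hM'.linearMap_ext fun x => by simp) (hM.linearMap_ext fun x => by simp)⟩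

end IsInducedAlong

section UnitsSmul

variable {G A M : Type} [Group G] [Ring A] [AddCommGroup M] [Module A M]

theorem u_inv_smul_u_smul (u : G →* Aˣ) (g : G) (m : M) : (u g⁻¹ : A) • (u g : A) • m = m := by
  rw [smul_smul, ← Units.val_mul, ← map_mul, inv_mul_cancel, map_one, Units.val_one, one_smul]

theorem u_smul_u_inv_smul (u : G →* Aˣ) (g : G) (m : M) : (u g : A) • (u g⁻¹ : A) • m = m := by
  simpa using u_inv_smul_u_smul u g⁻¹ m

end UnitsSmul

namespace IsSkewGroupAlgebra

variable {k Λ G A : Type} [Field k] [Ring Λ] [Algebra k Λ] [Group G] [Ring A] [Algebra k A]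
  {φ : G →* (Λ ≃ₐ[k] Λ)} {ι : Λ →ₐ[k] A} {u : G →* Aˣ}

theorem iota_mul_u (hA : IsSkewGroupAlgebra φ A ι u) (a : Λ) (g : G) :
    ι a * u g = u g * ι (φ g⁻¹ a) := by
  rw [hA.skew_comm, map_inv, AlgEquiv.aut_inv, AlgEquiv.apply_symm_apply]

variable [Fintype G]

variable (ι u) in
def sumHom : (G → Λ) →+ A :=
  AddMonoidHom.mk' (fun c => ∑ g, (u g : A) * ι (c g))
    fun c c' => by simp only [Pi.add_apply, map_add, mul_add, Finset.sum_add_distrib]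

theorem bijective_sumHom (hA : IsSkewGroupAlgebra φ A ι u) : Function.Bijective (sumHom ι u) := by
  have hsum (c : G →₀ Λ) : c.sum (fun g a => (u g : A) * ι a) = sumHom ι u c :=
    Finsupp.sum_fintype _ _ fun g => by simp
  refine ⟨fun c c' h => ?_, fun x => ?_⟩
  · have := (hA.free (sumHom ι u c)).unique (y₁ := Finsupp.equivFunOnFinite.symm c)
      (y₂ := Finsupp.equivFunOnFinite.symm c') (by rw [hsum]; rfl) (by rw [hsum, h]; rfl)
    simpa using congr_arg Finsupp.equivFunOnFinite this
  · obtain ⟨c, hc, -⟩ := hA.free x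
    exact ⟨c, by rw [hc, hsum]⟩

def equivFun (hA : IsSkewGroupAlgebra φ A ι u) : A ≃+ (G → Λ) :=
  (AddEquiv.ofBijective (sumHom ι u) hA.bijective_sumHom).symm

theorem equivFun_symm_apply (hA : IsSkewGroupAlgebra φ A ι u) (c : G → Λ) :
    hA.equivFun.symm c = ∑ g, (u g : A) * ι (c g) :=
  rfl

theorem equivFun_u [DecidableEq G] (hA : IsSkewGroupAlgebra φ A ι u) (g : G) :
    hA.equivFun (u g) = Pi.single g 1 := by
  rw [← AddEquiv.eq_symm_apply, equivFun_symm_apply]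
  simp [Pi.single_apply, apply_ite]

theorem equivFun_iota_mul (hA : IsSkewGroupAlgebra φ A ι u) (a : Λ) (b : A) (g : G) :
    hA.equivFun (ι a * b) g = φ g⁻¹ a * hA.equivFun b g := by
  suffices hA.equivFun (ι a * b) = fun g => φ g⁻¹ a * hA.equivFun b g from congr_fun this g
  rw [← AddEquiv.eq_symm_apply, equivFun_symm_apply]
  conv_lhs => rw [← hA.equivFun.symm_apply_apply b, equivFun_symm_apply, Finset.mul_sum]
  simp only [← mul_assoc, hA.iota_mul_u, map_mul]

theorem equivFun_mul_iota (hA : IsSkewGroupAlgebra φ A ι u) (a : Λ) (b : A) (g : G) :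
    hA.equivFun (b * ι a) g = hA.equivFun b g * a := by
  suffices hA.equivFun (b * ι a) = fun g => hA.equivFun b g * a from congr_fun this g
  rw [← AddEquiv.eq_symm_apply, equivFun_symm_apply]
  conv_lhs => rw [← hA.equivFun.symm_apply_apply b, equivFun_symm_apply, Finset.sum_mul]
  simp only [mul_assoc, map_mul]

theorem map_smul_of_generators (hA : IsSkewGroupAlgebra φ A ι u) {M N : Type}
    [AddCommGroup M] [Module A M] [AddCommGroup N] [Module A N] (f : M →+ N)
    (hι : ∀ (a : Λ) (m : M), f (ι a • m) = ι a • f m)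
    (hu : ∀ (g : G) (m : M), f ((u g : A) • m) = (u g : A) • f m) (b : A) (m : M) :
    f (b • m) = b • f m := by
  rw [← hA.equivFun.symm_apply_apply b, equivFun_symm_apply, Finset.sum_smul, map_sum,
    Finset.sum_smul]
  simp only [mul_smul, hu, hι]

end IsSkewGroupAlgebra

section Coinduced

variable {k Λ A : Type} [Field k] [Ring Λ] [Algebra k Λ] [Ring A] [Algebra k A]
  {ι : Λ →ₐ[k] A} {X : Type} [AddCommGroup X] [Module Λ X]

def Res.map {M N : Type} [AddCommGroup M] [Module A M] [AddCommGroup N] [Module A N]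
    (F : M →ₗ[A] N) : Res ι M →ₗ[Λ] Res ι N where
  toFun := F
  map_add' := F.map_add
  map_smul' a := F.map_smul (ι a)

variable (ι X) in
/-- The coinduced module `Hom_Λ(A, X)`, on which `A` acts by `(b • f) c = f (c * b)`. -/
def coindSubgroup : AddSubgroup (A →+ X) where
  carrier := {f | ∀ (a : Λ) (c : A), f (ι a * c) = a • f c}
  add_mem' hf hf' a c := by simp [hf a c, hf' a c, smul_add]
  zero_mem' a c := by simp
  neg_mem' hf a c := by simp [hf a c]

variable (ι X) in
abbrev Coind : Type := coindSubgroup ι X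

instance : SMul A (Coind ι X) where
  smul b f := ⟨f.1.comp (AddMonoidHom.mulRight b), fun a c => by
    simpa [mul_assoc] using f.2 a (c * b)⟩

theorem Coind.smul_apply (b : A) (f : Coind ι X) (c : A) : (b • f).1 c = f.1 (c * b) :=
  rfl

instance : Module A (Coind ι X) where
  one_smul f := Subtype.ext <| AddMonoidHom.ext fun c => congr_arg f.1 (mul_one c)
  mul_smul b b' f := Subtype.ext <| AddMonoidHom.ext fun c => congr_arg f.1 (mul_assoc c b b').symm
  smul_zero _ := rfl
  smul_add _ _ _ := rfl
  add_smul b b' f := Subtype.ext <| AddMonoidHom.ext fun c =>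
    (congr_arg f.1 (mul_add c b b')).trans (f.1.map_add _ _)
  zero_smul f := Subtype.ext <| AddMonoidHom.ext fun c =>
    (congr_arg f.1 (mul_zero c)).trans f.1.map_zero

def Coind.evalOne : Res ι (Coind ι X) →ₗ[Λ] X where
  toFun := fun f : Coind ι X => f.1 1
  map_add' _ _ := rfl
  map_smul' a (f : Coind ι X) := by
    change (ι a • f).1 1 = a • f.1 1
    rw [Coind.smul_apply, one_mul, ← mul_one (ι a)]
    exact f.2 a 1

variable {G : Type} [Group G] [Fintype G] {φ : G →* (Λ ≃ₐ[k] Λ)} {u : G →* Aˣ}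

def Coind.unit (hA : IsSkewGroupAlgebra φ A ι u) : X →+ Coind ι X where
  toFun x := ⟨AddMonoidHom.mk' (fun c => hA.equivFun c 1 • x) fun c c' => by
      rw [map_add, Pi.add_apply, add_smul], fun a c => by
    change hA.equivFun (ι a * c) 1 • x = a • hA.equivFun c 1 • x
    rw [hA.equivFun_iota_mul, inv_one, map_one, AlgEquiv.one_apply, mul_smul]⟩
  map_zero' := Subtype.ext <| AddMonoidHom.ext fun _ => smul_zero _
  map_add' _ _ := Subtype.ext <| AddMonoidHom.ext fun _ => smul_add _ _ _

theorem Coind.unit_apply (hA : IsSkewGroupAlgebra φ A ι u) (x : X) (c : A) :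
    (Coind.unit hA x).1 c = hA.equivFun c 1 • x :=
  rfl

theorem Coind.unit_smul (hA : IsSkewGroupAlgebra φ A ι u) (a : Λ) (x : X) :
    Coind.unit hA (a • x) = ι.toRingHom a • Coind.unit hA x :=
  Subtype.ext <| AddMonoidHom.ext fun c => by
    change hA.equivFun c 1 • a • x = hA.equivFun (c * ι a) 1 • x
    rw [hA.equivFun_mul_iota, mul_smul]

end Coinduced

namespace IsInducedAlong

variable {k Λ A G X M : Type} [Field k] [Ring Λ] [Algebra k Λ] [Ring A] [Algebra k A]
  {ι : Λ →ₐ[k] A} [Group G] {φ : G →* (Λ ≃ₐ[k] Λ)} {u : G →* Aˣ}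
  [AddCommGroup X] [Module Λ X] [AddCommGroup M] [Module A M] {θ : X →+ M}

theorem apply_smul (hM : IsInducedAlong ι.toRingHom X M θ) (a : Λ) (x : X) :
    θ (a • x) = ι a • θ x :=
  hM.semilinear a x

def resLinearMap (hM : IsInducedAlong ι.toRingHom X M θ) : X →ₗ[Λ] Res ι M where
  toFun := θ
  map_add' := θ.map_add
  map_smul' := hM.semilinear

theorem twist (hM : IsInducedAlong ι.toRingHom X M θ) (hA : IsSkewGroupAlgebra φ A ι u)
    (g : G) : IsInducedAlong ι.toRingHom (Twisted φ g X) M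
      ((DistribSMul.toAddMonoidHom M (u g : A)).comp
        (θ.comp (Twisted.equiv φ g X).symm.toAddMonoidHom)) where
  semilinear a x := by
    change (u g : A) • θ ((Twisted.equiv φ g X).symm (a • x)) =
      ι a • (u g : A) • θ ((Twisted.equiv φ g X).symm x)
    rw [Twisted.equiv_symm_smul, hM.apply_smul, smul_smul, smul_smul, ← hA.iota_mul_u]
  universal N _ _ f hf := by
    let f' := (DistribSMul.toAddMonoidHom N (u g⁻¹ : A)).comp
      (f.comp (Twisted.equiv φ g X).toAddMonoidHom)
    have hf' (a : Λ) (x : X) : f' (a • x) = ι.toRingHom a • f' x := by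
      have hx : f (Twisted.equiv φ g X (a • x)) = ι (φ g a) • f (Twisted.equiv φ g X x) := by
        rw [Twisted.equiv_smul]
        exact hf _ _
      change (u g⁻¹ : A) • f (Twisted.equiv φ g X (a • x)) =
        ι a • (u g⁻¹ : A) • f (Twisted.equiv φ g X x)
      rw [hx, smul_smul, smul_smul, hA.iota_mul_u, inv_inv]
    refine ⟨hM.lift f' hf', fun x => ?_, fun F hF => hM.linearMap_ext fun x => ?_⟩
    · change hM.lift f' hf' ((u g : A) • θ ((Twisted.equiv φ g X).symm x)) = f x
      rw [map_smul, lift_apply]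
      change (u g : A) • (u g⁻¹ : A) • f (Twisted.equiv φ g X ((Twisted.equiv φ g X).symm x)) = f x
      rw [AddEquiv.apply_symm_apply, u_smul_u_inv_smul]
    · have hx : F ((u g : A) • θ x) = f (Twisted.equiv φ g X x) := hF (Twisted.equiv φ g X x)
      rw [lift_apply]
      change F (θ x) = (u g⁻¹ : A) • f (Twisted.equiv φ g X x)
      rw [← hx, map_smul, u_inv_smul_u_smul]

variable [Fintype G]

/-- The projection of `A ⊗_Λ X` onto its summand `1 ⊗ X`. -/
def componentLinearMap (hM : IsInducedAlong ι.toRingHom X M θ)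
    (hA : IsSkewGroupAlgebra φ A ι u) : Res ι M →ₗ[Λ] X :=
  Coind.evalOne ∘ₗ Res.map (hM.lift (Coind.unit hA) (Coind.unit_smul hA))

def component (hM : IsInducedAlong ι.toRingHom X M θ) (hA : IsSkewGroupAlgebra φ A ι u) :
    M →+ X :=
  (hM.componentLinearMap hA).toAddMonoidHom

theorem component_apply_eq_lift (hM : IsInducedAlong ι.toRingHom X M θ)
    (hA : IsSkewGroupAlgebra φ A ι u) (m : M) :
    hM.component hA m = (hM.lift (Coind.unit hA) (Coind.unit_smul hA) m).1 1 :=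
  rfl

theorem component_iota_smul (hM : IsInducedAlong ι.toRingHom X M θ)
    (hA : IsSkewGroupAlgebra φ A ι u) (a : Λ) (m : M) :
    hM.component hA (ι a • m) = a • hM.component hA m :=
  (hM.componentLinearMap hA).map_smul a m

theorem component_u_smul [DecidableEq G] (hM : IsInducedAlong ι.toRingHom X M θ)
    (hA : IsSkewGroupAlgebra φ A ι u) (g : G) (x : X) :
    hM.component hA ((u g : A) • θ x) = if g = 1 then x else 0 := by
  rw [component_apply_eq_lift, map_smul, Coind.smul_apply, lift_apply, Coind.unit_apply, one_mul,
    hA.equivFun_u, Pi.single_apply]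
  simp only [@eq_comm _ 1 g, ite_smul, one_smul, zero_smul]

theorem component_apply (hM : IsInducedAlong ι.toRingHom X M θ)
    (hA : IsSkewGroupAlgebra φ A ι u) (x : X) : hM.component hA (θ x) = x := by
  classical
  simpa using hM.component_u_smul hA 1 x

theorem sum_u_smul_component (hM : IsInducedAlong ι.toRingHom X M θ)
    (hA : IsSkewGroupAlgebra φ A ι u) (m : M) :
    ∑ g, (u g : A) • θ (hM.component hA ((u g⁻¹ : A) • m)) = m := by
  classical
  -- The left side is `A`-linear in `m`, since it commutes with the generators `ι a` and `u h`
  -- of `A`; so it suffices to compare both sides on `θ X`.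
  let D : M →+ M := AddMonoidHom.mk'
    (fun m => ∑ g, (u g : A) • θ (hM.component hA ((u g⁻¹ : A) • m)))
    fun m m' => by simp only [smul_add, map_add, Finset.sum_add_distrib]
  have hι (a : Λ) (m : M) : D (ι a • m) = ι a • D m := by
    simp only [D, AddMonoidHom.mk'_apply, Finset.smul_sum]
    refine Finset.sum_congr rfl fun g _ => ?_
    rw [smul_smul, hA.skew_comm, mul_smul, component_iota_smul, hM.apply_smul, smul_smul,
      smul_smul, ← hA.iota_mul_u]
  have hu (h : G) (m : M) : D ((u h : A) • m) = (u h : A) • D m := by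
    simp only [D, AddMonoidHom.mk'_apply, Finset.smul_sum]
    rw [← Equiv.sum_comp (Equiv.mulLeft h)]
    refine Finset.sum_congr rfl fun g _ => ?_
    rw [Equiv.coe_mulLeft, mul_inv_rev, map_mul, map_mul, Units.val_mul, Units.val_mul, mul_smul,
      mul_smul, u_inv_smul_u_smul]
  let DA : M →ₗ[A] M := { D with map_smul' := hA.map_smul_of_generators D hι hu }
  have hDA : DA = LinearMap.id := hM.linearMap_ext fun x => by
    change ∑ g, (u g : A) • θ (hM.component hA ((u g⁻¹ : A) • θ x)) = θ x
    rw [Finset.sum_eq_single 1 (fun g _ hg => by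
      rw [component_u_smul, if_neg (inv_ne_one.mpr hg), map_zero, smul_zero]) (by simp)]
    rw [inv_one, map_one, Units.val_one, one_smul, one_smul, component_apply]
  exact LinearMap.congr_fun hDA m

theorem component_u_inv_smul_sum (hM : IsInducedAlong ι.toRingHom X M θ)
    (hA : IsSkewGroupAlgebra φ A ι u) (x : G → X) (h : G) :
    hM.component hA ((u h⁻¹ : A) • ∑ g, (u g : A) • θ (x g)) = x h := by
  classical
  simp only [Finset.smul_sum, map_sum, smul_smul, ← Units.val_mul, ← map_mul, component_u_smul,
    inv_mul_eq_one, Finset.sum_ite_eq, Finset.mem_univ, if_true]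

/-- The summand `{}^{g}X` of `A ⊗_Λ X` is `u g ⊗ X`. -/
def resEquiv (hM : IsInducedAlong ι.toRingHom X M θ) (hA : IsSkewGroupAlgebra φ A ι u) :
    Res ι M ≃ₗ[Λ] ∀ g, Twisted φ g X where
  toFun := fun (m : M) g => Twisted.equiv φ g X (hM.component hA ((u g⁻¹ : A) • m))
  map_add' := fun (m m' : M) => funext fun g => by
    change Twisted.equiv φ g X (hM.component hA ((u g⁻¹ : A) • (m + m'))) =
      Twisted.equiv φ g X (hM.component hA ((u g⁻¹ : A) • m)) +
        Twisted.equiv φ g X (hM.component hA ((u g⁻¹ : A) • m'))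
    rw [smul_add, map_add, map_add]
  map_smul' := fun a (m : M) => funext fun g => by
    change Twisted.equiv φ g X (hM.component hA ((u g⁻¹ : A) • ι a • m)) =
      a • Twisted.equiv φ g X (hM.component hA ((u g⁻¹ : A) • m))
    rw [smul_smul, hA.skew_comm, mul_smul, component_iota_smul]
    rfl
  invFun x := (∑ g, (u g : A) • θ ((Twisted.equiv φ g X).symm (x g)) : M)
  left_inv := hM.sum_u_smul_component hA
  right_inv x := funext fun h => by
    change Twisted.equiv φ h X (hM.component hA ((u h⁻¹ : A) • ∑ g, (u g : A) •
      θ ((Twisted.equiv φ g X).symm (x g)))) = x h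
    rw [hM.component_u_inv_smul_sum hA (fun g => (Twisted.equiv φ g X).symm (x g))]
    exact (Twisted.equiv φ h X).apply_symm_apply (x h)

end IsInducedAlong

end

theorem induced_modules_iso_iff_twist_iso_general
    (k Λ G : Type) [Field k] [Ring Λ] [Algebra k Λ]
    [Group G] [Fintype G]
    (φ : G →* (Λ ≃ₐ[k] Λ))
    (A : Type) [Ring A] [Algebra k A] (ιA : Λ →ₐ[k] A) (uA : G →* Aˣ)
    (hA : IsSkewGroupAlgebra φ A ιA uA)
    (X : Type) [AddCommGroup X] [Module Λ X] (hX : IsIndec Λ X)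
    (Y : Type) [AddCommGroup Y] [Module Λ Y] [Module k Y] [IsScalarTower k Λ Y]
    [FiniteDimensional k Y] (hY : IsIndec Λ Y)
    (MX : Type) [AddCommGroup MX] [Module A MX] (θX : X →+ MX)
    (hMX : IsInducedAlong ιA.toRingHom X MX θX)
    (MY : Type) [AddCommGroup MY] [Module A MY] (θY : Y →+ MY)
    (hMY : IsInducedAlong ιA.toRingHom Y MY θY) :
    Nonempty (MX ≃ₗ[A] MY) ↔ ∃ g : G, Nonempty (Y ≃ₗ[Λ] Twisted φ g X) := by
  classical
  constructor
  · rintro ⟨E⟩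
    have : IsNoetherian Λ Y := isNoetherian_of_tower k inferInstance
    have : IsArtinian Λ Y := isArtinian_of_tower k inferInstance
    refine hY.exists_linearEquiv_of_retract_pi (hX.twisted φ)
      ((hMX.resEquiv hA).toLinearMap ∘ₗ Res.map E.symm.toLinearMap ∘ₗ hMY.resLinearMap)
      (hMY.componentLinearMap hA ∘ₗ Res.map E.toLinearMap ∘ₗ (hMX.resEquiv hA).symm.toLinearMap)
      (LinearMap.ext fun y => ?_)
    change hMY.component hA (E ((hMX.resEquiv hA).symm (hMX.resEquiv hA (E.symm (θY y))))) = y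
    have hres := (hMX.resEquiv hA).symm_apply_apply (E.symm (θY y))
    rw [hres, LinearEquiv.apply_symm_apply, hMY.component_apply]
  · rintro ⟨g, ⟨e⟩⟩
    exact ((hMX.twist hA g).comp_linearEquiv e).nonempty_linearEquiv hMY

/-- **Lemma 2.4(2).** For finite dimensional indecomposable `Λ`-modules `X`, `Y`:
`ΛG ⊗_Λ X ≅ ΛG ⊗_Λ Y` as `ΛG`-modules if and only if `Y ≅ {}^{g}X` for some `g ∈ G`. -/
theorem induced_modules_iso_iff_twist_iso
    (k Λ G : Type) [Field k] [IsAlgClosed k] [Ring Λ] [Algebra k Λ]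
    [Group G] [Fintype G] (hchar : (Fintype.card G : k) ≠ 0)
    (φ : G →* (Λ ≃ₐ[k] Λ))
    (A : Type) [Ring A] [Algebra k A] (ιA : Λ →ₐ[k] A) (uA : G →* Aˣ)
    (hA : IsSkewGroupAlgebra φ A ιA uA)
    (X : Type) [AddCommGroup X] [Module Λ X] [Module k X] [IsScalarTower k Λ X]
    [FiniteDimensional k X] (hX : IsIndec Λ X)
    (Y : Type) [AddCommGroup Y] [Module Λ Y] [Module k Y] [IsScalarTower k Λ Y]
    [FiniteDimensional k Y] (hY : IsIndec Λ Y)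
    (MX : Type) [AddCommGroup MX] [Module A MX] (θX : X →+ MX)
    (hMX : IsInducedAlong ιA.toRingHom X MX θX)
    (MY : Type) [AddCommGroup MY] [Module A MY] (θY : Y →+ MY)
    (hMY : IsInducedAlong ιA.toRingHom Y MY θY) :
    Nonempty (MX ≃ₗ[A] MY) ↔ ∃ g : G, Nonempty (Y ≃ₗ[Λ] Twisted φ g X) :=
  induced_modules_iso_iff_twist_iso_general k Λ G φ A ιA uA hA X hX Y hY MX θX hMX MY θY hMY
end

section
/- Assume Condition C. Then for each i ∈ {1,…,r}, ρ_i ⊗_k X ≅ X as Λ-modules, and ρ_i ⊗_k X is indecomposable as a ΛH_X-module. -/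
/-! Twisting by a character of `H` only rescales the action of the units `u h`, so over `Λ` the
module `ρ ⊗ X` is just `X`. Restriction of scalars embeds the submodule lattice of a
`ΛH`-module into that of its restriction as a bounded sublattice, so a nontrivial
`ΛH`-decomposition of `ρ ⊗ X` would be a nontrivial `Λ`-decomposition of `X`. -/

theorem IsIndec.of_injective_boundedLatticeHom {R S M N F : Type} [Ring R] [Ring S]
    [AddCommGroup M] [Module R M] [AddCommGroup N] [Module S N]
    [FunLike F (Submodule R M) (Submodule S N)] [BoundedLatticeHomClass F _ _]
    (f : F) (hf : Function.Injective f) (h : IsIndec S N) : IsIndec R M := by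
  have f_eq_bot_iff (p : Submodule R M) : f p = ⊥ ↔ p = ⊥ := hf.eq_iff' (map_bot f)
  refine ⟨?_, fun p q hpq => ?_⟩
  · have := h.1
    refine (Submodule.nontrivial_iff R).1 ⟨⊥, ⊤, fun hbt => ?_⟩
    exact bot_ne_top (by rw [← map_bot f, hbt, map_top] : (⊥ : Submodule S N) = ⊤)
  · simpa only [f_eq_bot_iff] using h.2 _ _ (hpq.map f)

theorem IsIndec.of_linearEquiv_s12 {R M N : Type} [Ring R] [AddCommGroup M] [Module R M]
    [AddCommGroup N] [Module R N] (e : M ≃ₗ[R] N) (h : IsIndec R N) : IsIndec R M :=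
  h.of_injective_boundedLatticeHom _ (Submodule.orderIsoMapComap e).injective

namespace Res

variable {k Λ A : Type} [Field k] [Ring Λ] [Algebra k Λ] [Ring A] [Algebra k A]
  (ι : Λ →ₐ[k] A) (M : Type) [AddCommGroup M] [Module A M]

def restrictScalarsLatticeHom : BoundedLatticeHom (Submodule A M) (Submodule Λ (Res ι M)) where
  toFun p :=
    { carrier := (p : Set M)
      add_mem' := p.add_mem
      zero_mem' := p.zero_mem
      smul_mem' := fun a _ hx => p.smul_mem (ι a) hx }
  map_sup' p q := by
    refine le_antisymm (fun x hx => ?_) (sup_le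
      (fun _ => Submodule.mem_sup_left (S := p) (T := q))
      fun _ => Submodule.mem_sup_right (S := p) (T := q))
    -- `@id M` retypes `x : Res ι M` so that `p ⊔ q` can be read as a submodule containing it
    obtain ⟨y, hy, z, hz, rfl⟩ := Submodule.mem_sup.1 (show @id M x ∈ p ⊔ q from hx)
    exact Submodule.add_mem_sup hy hz
  map_inf' _ _ := rfl
  map_top' := rfl
  map_bot' := rfl

theorem restrictScalarsLatticeHom_injective :
    Function.Injective (restrictScalarsLatticeHom ι M) := fun _ _ h =>
  SetLike.ext fun x => SetLike.ext_iff.1 h x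

end Res

theorem IsIndec.of_res {k Λ A : Type} [Field k] [Ring Λ] [Algebra k Λ] [Ring A] [Algebra k A]
    {ι : Λ →ₐ[k] A} {M : Type} [AddCommGroup M] [Module A M] (h : IsIndec Λ (Res ι M)) :
    IsIndec A M :=
  h.of_injective_boundedLatticeHom _ (Res.restrictScalarsLatticeHom_injective ι M)

theorem charTwist_iso_and_indecomposable_general
    (k Λ G : Type) [Field k] [Ring Λ] [Algebra k Λ]
    [Group G]
    -- Condition C : X is a finite dimensional indecomposable Λ-module with H_X abelian
    (X : Type) [AddCommGroup X] [Module Λ X] (hX : IsIndec Λ X)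
    (H : Subgroup G)
    -- the skew group algebra ΛH_X
    (B : Type) [Ring B] [Algebra k B] (ιB : Λ →ₐ[k] B) (uB : H →* Bˣ)
    -- the ΛH_X-module structure on X (extending its Λ-module structure)
    [Module B X] (hBX : ∀ (a : Λ) (x : X), ιB a • x = a • x)
    -- the r = |H_X| pairwise distinct characters of H_X
    (r : ℕ)
    (χ : Fin r → (H →* kˣ))
    -- the ΛH_X-modules ρ_i ⊗_k X
    (Xρ : Fin r → Type) [∀ i, AddCommGroup (Xρ i)] [∀ i, Module B (Xρ i)]
    (hXρ : ∀ i, IsCharTwist ιB uB (χ i) X (Xρ i))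
    (i : Fin r) :
    Nonempty (Res ιB (Xρ i) ≃ₗ[Λ] X) ∧ IsIndec B (Xρ i) := by
  obtain ⟨e, he, -⟩ := hXρ i
  let E : Res ιB (Xρ i) ≃ₗ[Λ] X :=
    AddEquiv.toLinearEquiv (e : Res ιB (Xρ i) ≃+ X) fun a x => (he a x).trans (hBX a (e x))
  exact ⟨⟨E⟩, (hX.of_linearEquiv_s12 E).of_res⟩

/-- **Lemma 2.5(1).** Assume Condition C.  Then for each `i`, `ρ_i ⊗_k X ≅ X` as
`Λ`-modules, and `ρ_i ⊗_k X` is indecomposable as a `ΛH_X`-module. -/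
theorem charTwist_iso_and_indecomposable
    (k Λ G : Type) [Field k] [IsAlgClosed k] [Ring Λ] [Algebra k Λ]
    [Group G] [Fintype G] (hchar : (Fintype.card G : k) ≠ 0)
    (φ : G →* (Λ ≃ₐ[k] Λ))
    -- Condition C : X is a finite dimensional indecomposable Λ-module with H_X abelian
    (X : Type) [AddCommGroup X] [Module Λ X] [Module k X] [IsScalarTower k Λ X]
    [FiniteDimensional k X] (hX : IsIndec Λ X)
    (H : Subgroup G) (hH : (H : Set G) = Hset φ X)
    (hab : ∀ a b : H, a * b = b * a)
    -- the skew group algebra ΛH_X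
    (B : Type) [Ring B] [Algebra k B] (ιB : Λ →ₐ[k] B) (uB : H →* Bˣ)
    (hB : IsSkewGroupAlgebra (φ.comp H.subtype) B ιB uB)
    -- the ΛH_X-module structure on X (extending its Λ-module structure)
    [Module B X] (hBX : ∀ (a : Λ) (x : X), ιB a • x = a • x)
    -- the r = |H_X| pairwise distinct characters of H_X
    (r : ℕ) (hr : r = Nat.card H)
    (χ : Fin r → (H →* kˣ)) (hχ : Function.Injective χ)
    -- the ΛH_X-modules ρ_i ⊗_k X
    (Xρ : Fin r → Type) [∀ i, AddCommGroup (Xρ i)] [∀ i, Module B (Xρ i)]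
    (hXρ : ∀ i, IsCharTwist ιB uB (χ i) X (Xρ i))
    (i : Fin r) :
    Nonempty (Res ιB (Xρ i) ≃ₗ[Λ] X) ∧ IsIndec B (Xρ i) :=
  charTwist_iso_and_indecomposable_general k Λ G X hX H B ιB uB hBX r χ Xρ hXρ i
end

section
/- Assume Condition C. Then for i ≠ j in {1,…,r}, ρ_i ⊗_k X and ρ_j ⊗_k X are not isomorphic as ΛH_X-modules. -/
private theorem aux_scalar_plus_nilpotent
    (k Λ : Type) [Field k] [IsAlgClosed k] [Ring Λ] [Algebra k Λ]
    (X : Type) [AddCommGroup X] [Module Λ X] [Module k X] [IsScalarTower k Λ X]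
    [FiniteDimensional k X]
    (hX : Nontrivial X ∧ ∀ p q : Submodule Λ X, IsCompl p q → p = ⊥ ∨ q = ⊥)
    (f : X ≃+ X)
    (hfk : ∀ (c : k) (x : X), f (c • x) = c • f x)
    (hfΛ : ∀ (a : Λ) (x : X), f (a • x) = a • f x) :
    ∃ (c : k) (m : ℕ), c ≠ 0 ∧ 0 < m ∧ ((f.toLinearEquiv hfk : Module.End k X) - c • 1) ^ m = 0 := by
  have hnontriv : Nontrivial X := hX.1
  set fE : Module.End k X := (f.toLinearEquiv hfk : X →ₗ[k] X) with hfE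
  obtain ⟨c, hc⟩ := Module.End.exists_eigenvalue fE
  obtain ⟨v, hv⟩ := hc.exists_hasEigenvector
  set n : Module.End k X := fE - c • 1 with hn
  have hcomm : ∀ (c : k) (a : Λ) (x : X), a • (c • x) = c • (a • x) := by
    intro c a x
    rw [← algebraMap_smul Λ c x, ← algebraMap_smul Λ c (a • x), smul_smul, smul_smul,
      Algebra.commutes]
  have hnΛ : ∀ (a : Λ) (x : X), n (a • x) = a • n x := by
    intro a x
    have hfE' : fE (a • x) = f (a • x) := rfl
    simp only [hn, LinearMap.sub_apply, LinearMap.smul_apply, Module.End.one_apply, hfE',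
      hfΛ, smul_sub, hcomm]
    rfl
  have hpowΛ : ∀ (j : ℕ) (a : Λ) (x : X), (n ^ j) (a • x) = a • (n ^ j) x := by
    intro j
    induction j with
    | zero => intro a x; simp
    | succ j ih =>
      intro a x
      rw [pow_succ, Module.End.mul_apply, Module.End.mul_apply, hnΛ, ih]
  obtain ⟨N, hN⟩ := Filter.eventually_atTop.mp (LinearMap.eventually_isCompl_ker_pow_range_pow n)
  set m := N + 1 with hm
  have hcompl := hN m (Nat.le_succ N)
  set p' : Submodule Λ X :=
    { carrier := {x | (n ^ m) x = 0}
      add_mem' := fun {a b} ha hb => by simp_all [map_add]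
      zero_mem' := by simp
      smul_mem' := fun a x hx => by
        simp only [Set.mem_setOf_eq] at hx ⊢
        rw [hpowΛ, hx, smul_zero] } with hp'
  set q' : Submodule Λ X :=
    { carrier := Set.range (n ^ m)
      add_mem' := fun {a b} ha hb => by
        obtain ⟨x, hx⟩ := ha; obtain ⟨y, hy⟩ := hb
        exact ⟨x + y, by rw [map_add, hx, hy]⟩
      zero_mem' := ⟨0, map_zero _⟩
      smul_mem' := fun a x hx => by
        obtain ⟨y, hy⟩ := hx
        exact ⟨a • y, by rw [hpowΛ, hy]⟩ } with hq'
  have hPQ : p' = ⊥ ∨ q' = ⊥ := by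
    apply hX.2
    constructor
    · rw [disjoint_iff, Submodule.eq_bot_iff]
      rintro x ⟨hx1, hx2⟩
      exact Submodule.disjoint_def.mp hcompl.disjoint x hx1 hx2
    · rw [codisjoint_iff, Submodule.eq_top_iff']
      intro x
      have := hcompl.codisjoint
      rw [codisjoint_iff] at this
      have hx : x ∈ LinearMap.ker (n ^ m) ⊔ LinearMap.range (n ^ m) := this ▸ Submodule.mem_top
      obtain ⟨y, hy, z, hz, rfl⟩ := Submodule.mem_sup.mp hx
      exact Submodule.add_mem _ (Submodule.mem_sup_left hy) (Submodule.mem_sup_right hz)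
  have hpne : p' ≠ ⊥ := by
    intro h
    have hvmem : v ∈ p' := by
      show (n ^ m) v = 0
      have hnv : n v = 0 := by
        simp only [hn, LinearMap.sub_apply, LinearMap.smul_apply, Module.End.one_apply]
        rw [hv.apply_eq_smul, sub_self]
      rw [hm, pow_succ, Module.End.mul_apply, hnv, map_zero]
    rw [h, Submodule.mem_bot] at hvmem
    exact hv.2 hvmem
  have hq0 : q' = ⊥ := hPQ.resolve_left hpne
  have hnm : n ^ m = 0 := by
    ext x
    have : (n ^ m) x ∈ q' := ⟨x, rfl⟩
    rw [hq0, Submodule.mem_bot] at this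
    simpa using this
  refine ⟨c, m, ?_, Nat.succ_pos N, hnm⟩
  intro hc0
  have hfu : IsUnit fE := ⟨⟨fE, ((f.toLinearEquiv hfk).symm : X →ₗ[k] X),
    by ext x; exact f.apply_symm_apply x, by ext x; exact f.symm_apply_apply x⟩, rfl⟩
  have : fE ^ m = 0 := by rw [← hnm, hn, hc0]; simp
  have h0 : IsUnit (0 : Module.End k X) := this ▸ hfu.pow m
  rw [isUnit_zero_iff] at h0
  obtain ⟨x, hx⟩ := exists_ne (0 : X)
  exact hx (by calc x = (1 : Module.End k X) x := rfl
                  _ = (0 : Module.End k X) x := by rw [← h0]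
                  _ = 0 := rfl)

/-- **Lemma 2.5(2).** Assume Condition C.  For `i ≠ j`, the `ΛH_X`-modules `ρ_i ⊗_k X`
and `ρ_j ⊗_k X` are not isomorphic. -/
theorem charTwists_not_isomorphic
    (k Λ G : Type) [Field k] [IsAlgClosed k] [Ring Λ] [Algebra k Λ]
    [Group G] [Fintype G] (hchar : (Fintype.card G : k) ≠ 0)
    (φ : G →* (Λ ≃ₐ[k] Λ))
    -- Condition C : X is a finite dimensional indecomposable Λ-module with H_X abelian
    (X : Type) [AddCommGroup X] [Module Λ X] [Module k X] [IsScalarTower k Λ X]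
    [FiniteDimensional k X] (hX : IsIndec Λ X)
    (H : Subgroup G) (hH : (H : Set G) = Hset φ X)
    (hab : ∀ a b : H, a * b = b * a)
    -- the skew group algebra ΛH_X
    (B : Type) [Ring B] [Algebra k B] (ιB : Λ →ₐ[k] B) (uB : H →* Bˣ)
    (hB : IsSkewGroupAlgebra (φ.comp H.subtype) B ιB uB)
    -- the ΛH_X-module structure on X (extending its Λ-module structure)
    [Module B X] (hBX : ∀ (a : Λ) (x : X), ιB a • x = a • x)
    -- the r = |H_X| pairwise distinct characters of H_X
    (r : ℕ) (hr : r = Nat.card H)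
    (χ : Fin r → (H →* kˣ)) (hχ : Function.Injective χ)
    -- the ΛH_X-modules ρ_i ⊗_k X
    (Xρ : Fin r → Type) [∀ i, AddCommGroup (Xρ i)] [∀ i, Module B (Xρ i)]
    (hXρ : ∀ i, IsCharTwist ιB uB (χ i) X (Xρ i))
    (i i' : Fin r) (hne : i ≠ i') :
    ¬ Nonempty (Xρ i ≃ₗ[B] Xρ i') := by
  rintro ⟨F⟩
  obtain ⟨e, he1, he2⟩ := hXρ i
  obtain ⟨e', he1', he2'⟩ := hXρ i'
  simp only [Units.smul_def] at he2 he2'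
  -- B-scalars coming from k act as k-scalars on X
  have halgX : ∀ (c : k) (x : X), algebraMap k B c • x = c • x := by
    intro c x
    rw [← ιB.commutes c, hBX, algebraMap_smul]
  have hecomm : ∀ (c : k) (x : Xρ i), e (algebraMap k B c • x) = algebraMap k B c • e x := by
    intro c x
    rw [← ιB.commutes c]; exact he1 _ x
  have he'comm : ∀ (c : k) (x : Xρ i'), e' (algebraMap k B c • x) = algebraMap k B c • e' x := by
    intro c x
    rw [← ιB.commutes c]; exact he1' _ x
  -- the induced additive automorphism of X
  set f : X ≃+ X := (e.symm.trans F.toAddEquiv).trans e' with hf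
  have hfapp : ∀ x : X, f x = e' (F (e.symm x)) := fun _ => rfl
  have hesymm : ∀ (a : Λ) (z : X), e.symm (ιB a • z) = ιB a • e.symm z := by
    intro a z
    apply e.injective
    rw [e.apply_symm_apply, he1, e.apply_symm_apply]
  have hfB : ∀ (a : Λ) (x : X), f (ιB a • x) = ιB a • f x := by
    intro a x
    rw [hfapp, hfapp, hesymm, map_smul F, he1']
  have hfΛ : ∀ (a : Λ) (x : X), f (a • x) = a • f x := by
    intro a x
    rw [← hBX, hfB, hBX]
  have hfk : ∀ (c : k) (x : X), f (c • x) = c • f x := by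
    intro c x
    rw [← algebraMap_smul Λ c x, hfΛ, algebraMap_smul]
  -- the twisted commutation with the group units
  have hesymm_u : ∀ (h : H) (z : X),
      e.symm ((uB h : B) • z)
        = algebraMap k B (((χ i h)⁻¹ : kˣ) : k) • ((uB h : B) • e.symm z) := by
    intro h z
    apply e.injective
    rw [e.apply_symm_apply, hecomm, he2, e.apply_symm_apply, smul_smul, ← map_mul,
      ← Units.val_mul, inv_mul_cancel, Units.val_one, map_one, one_smul]
  have hfu : ∀ (h : H) (x : X),
      f ((uB h : B) • x)
        = ((((χ i h)⁻¹ * χ i' h : kˣ)) : k) • ((uB h : B) • f x) := by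
    intro h x
    rw [hfapp, hesymm_u, map_smul F, map_smul F, he'comm, he2', hfapp, smul_smul, ← map_mul,
      halgX, Units.val_mul]
  -- scalar-plus-nilpotent decomposition of f
  obtain ⟨c, m, hc0, hm0, hnil⟩ := aux_scalar_plus_nilpotent k Λ X hX f hfk hfΛ
  have hnontriv : Nontrivial X := hX.1
  set fE : Module.End k X := (f.toLinearEquiv hfk : X →ₗ[k] X) with hfE
  set n : Module.End k X := fE - c • 1 with hn
  have hEnontriv : Nontrivial (Module.End k X) := by
    refine nontrivial_of_ne 1 0 fun h01 => ?_
    obtain ⟨x, hx⟩ := exists_ne (0 : X)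
    exact hx (by calc x = (1 : Module.End k X) x := rfl
                    _ = (0 : Module.End k X) x := by rw [h01]
                    _ = 0 := rfl)
  have hχeq : χ i = χ i' := by
    refine MonoidHom.ext fun h => ?_
    -- the k-linear endomorphism given by the action of uB h, as a unit
    have humap : ∀ (g : H) (c' : k) (x : X),
        (uB g : B) • (c' • x) = c' • ((uB g : B) • x) := by
      intro g c' x
      rw [← halgX, smul_smul, ← Algebra.commutes, ← smul_smul, halgX]
    set uE : Module.End k X :=
      { toFun := fun x => (uB h : B) • x
        map_add' := fun x y => smul_add _ x y
        map_smul' := fun c' x => humap h c' x } with huE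
    set uE' : Module.End k X :=
      { toFun := fun x => (uB h⁻¹ : B) • x
        map_add' := fun x y => smul_add _ x y
        map_smul' := fun c' x => humap h⁻¹ c' x } with huE'
    have hinv1 : uE * uE' = 1 := by
      ext x
      show (uB h : B) • (uB h⁻¹ : B) • x = x
      rw [smul_smul, ← Units.val_mul, ← map_mul, mul_inv_cancel, map_one, Units.val_one, one_smul]
    have hinv2 : uE' * uE = 1 := by
      ext x
      show (uB h⁻¹ : B) • (uB h : B) • x = x
      rw [smul_smul, ← Units.val_mul, ← map_mul, inv_mul_cancel, map_one, Units.val_one, one_smul]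
    set U : (Module.End k X)ˣ := ⟨uE, uE', hinv1, hinv2⟩ with hU
    set ch : k := (((χ i h)⁻¹ * χ i' h : kˣ) : k) with hch
    have hrelE : fE * uE = ch • (uE * fE) := by
      ext x
      exact hfu h x
    have h1 : (↑U⁻¹ * fE * ↑U : Module.End k X) = ch • fE := by
      calc (↑U⁻¹ * fE * ↑U : Module.End k X) = ↑U⁻¹ * (fE * ↑U) := by rw [mul_assoc]
        _ = ↑U⁻¹ * (ch • (↑U * fE)) := by
              show (↑U⁻¹ : Module.End k X) * (fE * uE) = ↑U⁻¹ * (ch • (uE * fE))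
              rw [hrelE]
        _ = ch • ((↑U⁻¹ * ↑U) * fE) := by rw [mul_smul_comm, mul_assoc]
        _ = ch • fE := by rw [U.inv_mul, one_mul]
    have hconj : (↑U⁻¹ * n * ↑U : Module.End k X) = (ch * c - c) • 1 + ch • n := by
      have : (↑U⁻¹ * n * ↑U : Module.End k X) = ↑U⁻¹ * fE * ↑U - c • (↑U⁻¹ * ↑U) := by
        rw [hn]
        rw [mul_sub, sub_mul, mul_smul_comm, smul_mul_assoc, mul_one]
      rw [this, U.inv_mul, h1, hn]
      module
    have hconjnil : ((↑U⁻¹ * n * ↑U : Module.End k X)) ^ m = 0 := by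
      rw [Units.conj_pow', hnil, mul_zero, zero_mul]
    have hd : ch * c - c = 0 := by
      by_contra hd
      have hu1 : IsUnit ((ch * c - c) • (1 : Module.End k X)) := by
        rw [← Algebra.algebraMap_eq_smul_one]
        exact (isUnit_iff_ne_zero.mpr hd).map (algebraMap k (Module.End k X))
      have hnil2 : IsNilpotent (ch • n) := ⟨m, by rw [smul_pow, hnil, smul_zero]⟩
      have hcomm2 : Commute (ch • n) ((ch * c - c) • (1 : Module.End k X)) := by
        rw [← Algebra.algebraMap_eq_smul_one]
        exact (Algebra.commutes _ _).symm
      have hUnit : IsUnit (↑U⁻¹ * n * ↑U : Module.End k X) := by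
        rw [hconj]
        exact hnil2.isUnit_add_left_of_commute hu1 hcomm2
      exact hUnit.not_isNilpotent ⟨m, hconjnil⟩
    have hch1 : ch = 1 := by
      have : ch * c = 1 * c := by rw [one_mul, ← sub_eq_zero]; exact hd
      exact mul_right_cancel₀ hc0 this
    have : ((χ i h)⁻¹ * χ i' h : kˣ) = 1 := Units.ext (by rw [← hch, hch1, Units.val_one])
    exact (inv_mul_eq_one.mp this)
  exact hne (hχ hχeq)
end

section
/- Assume Condition C. Then ΛH_X ⊗_Λ X ≅ ⊕_{i=1}^{r} ρ_i ⊗_k X as ΛH_X-modules. -/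
private lemma sum_units_char_eq_zero {k H : Type} [Field k] [Group H] [Fintype H]
    (ψ : H →* kˣ) (hψ : ψ ≠ 1) : ∑ h : H, ((ψ h : kˣ) : k) = 0 := by
  obtain ⟨h0, hh0⟩ : ∃ h0 : H, ψ h0 ≠ 1 := by
    by_contra hc
    push_neg at hc
    exact hψ (MonoidHom.ext fun h => hc h)
  have key : ((ψ h0 : kˣ) : k) * ∑ h : H, ((ψ h : kˣ) : k) = ∑ h : H, ((ψ h : kˣ) : k) := by
    rw [Finset.mul_sum]
    exact Fintype.sum_equiv (Equiv.mulLeft h0) _ _ fun h => by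
      simp [map_mul]
  have h1 : (((ψ h0 : kˣ) : k) - 1) * ∑ h : H, ((ψ h : kˣ) : k) = 0 := by
    rw [sub_mul, one_mul, key, sub_self]
  have h2 : ((ψ h0 : kˣ) : k) - 1 ≠ 0 := by
    rw [sub_ne_zero]
    intro hh
    exact hh0 (Units.ext (by simpa using hh))
  exact (mul_eq_zero.mp h1).resolve_left h2

/-- **Lemma 2.5(3).** Assume Condition C.  Then
`ΛH_X ⊗_Λ X ≅ ⊕_{i=1}^{r} ρ_i ⊗_k X` as `ΛH_X`-modules. -/
theorem induced_to_HX_iso_sum_of_charTwists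
    (k Λ G : Type) [Field k] [IsAlgClosed k] [Ring Λ] [Algebra k Λ]
    [Group G] [Fintype G] (hchar : (Fintype.card G : k) ≠ 0)
    (φ : G →* (Λ ≃ₐ[k] Λ))
    -- Condition C : X is a finite dimensional indecomposable Λ-module with H_X abelian
    (X : Type) [AddCommGroup X] [Module Λ X] [Module k X] [IsScalarTower k Λ X]
    [FiniteDimensional k X] (hX : IsIndec Λ X)
    (H : Subgroup G) (hH : (H : Set G) = Hset φ X)
    (hab : ∀ a b : H, a * b = b * a)
    -- the skew group algebra ΛH_X
    (B : Type) [Ring B] [Algebra k B] (ιB : Λ →ₐ[k] B) (uB : H →* Bˣ)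
    (hB : IsSkewGroupAlgebra (φ.comp H.subtype) B ιB uB)
    -- the ΛH_X-module structure on X (extending its Λ-module structure)
    [Module B X] (hBX : ∀ (a : Λ) (x : X), ιB a • x = a • x)
    -- the r = |H_X| pairwise distinct characters of H_X
    (r : ℕ) (hr : r = Nat.card H)
    (χ : Fin r → (H →* kˣ)) (hχ : Function.Injective χ)
    -- the ΛH_X-modules ρ_i ⊗_k X
    (Xρ : Fin r → Type) [∀ i, AddCommGroup (Xρ i)] [∀ i, Module B (Xρ i)]
    (hXρ : ∀ i, IsCharTwist ιB uB (χ i) X (Xρ i))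
    (N : Type) [AddCommGroup N] [Module B N] (θ : X →+ N)
    (hN : IsInducedAlong ιB.toRingHom X N θ) :
    Nonempty (N ≃ₗ[B] ∀ i, Xρ i) := by
  classical
  haveI : Fintype ↥H := Fintype.ofFinite _
  have hrH : r = Fintype.card ↥H := by rw [hr, Nat.card_eq_fintype_card]
  have hcardH : ((Fintype.card ↥H : ℕ) : k) ≠ 0 := by
    intro h0
    obtain ⟨m, hm⟩ := Subgroup.card_subgroup_dvd_card H
    apply hchar
    have hGm : (Fintype.card G : ℕ) = Fintype.card ↥H * m := by
      rw [← Nat.card_eq_fintype_card, ← Nat.card_eq_fintype_card]; exact hm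
    rw [hGm, Nat.cast_mul, h0, zero_mul]
  have hkX : ∀ (c : k) (x : X), algebraMap k B c • x = c • x := by
    intro c x
    rw [← ιB.commutes c, hBX, algebraMap_smul]
  choose e he1 he2 using hXρ
  simp only [Units.smul_def] at he2
  have hesymm1 : ∀ (i : Fin r) (a : Λ) (y : X),
      (e i).symm (ιB a • y) = ιB a • (e i).symm y := by
    intro i a y
    apply (e i).injective
    rw [(e i).apply_symm_apply, he1, (e i).apply_symm_apply]
  have hesymmk : ∀ (i : Fin r) (c : k) (y : X),
      (e i).symm (algebraMap k B c • y) = algebraMap k B c • (e i).symm y := by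
    intro i c y
    rw [← ιB.commutes c]
    exact hesymm1 i _ y
  let f : X →+ (∀ i, Xρ i) :=
    { toFun := fun x i => (e i).symm x
      map_zero' := by funext i; simp
      map_add' := by intro x y; funext i; simp }
  have hf : ∀ (a : Λ) (x : X), f (a • x) = ιB.toRingHom a • f x := by
    intro a x
    funext i
    show (e i).symm (a • x) = ιB a • (e i).symm x
    rw [← hBX, hesymm1]
  obtain ⟨F, hFθ, -⟩ := hN.universal (∀ i, Xρ i) f hf
  have key : ∀ (h : ↥H) (x : X) (i : Fin r),
      F ((uB h : B) • θ x) i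
        = algebraMap k B ((χ i h : kˣ) : k) • (e i).symm ((uB h : B) • x) := by
    intro h x i
    have h1 : F ((uB h : B) • θ x) i = (uB h : B) • (e i).symm x := by
      rw [map_smul, hFθ]; rfl
    rw [h1]
    apply (e i).injective
    rw [he2 i h, ← hesymmk, (e i).apply_symm_apply, (e i).apply_symm_apply]
  obtain ⟨F0, hF0, hFuniq⟩ := hN.universal N θ hN.semilinear
  have hspan : ∀ n : N, n ∈ Submodule.span B (Set.range θ) := by
    set P := Submodule.span B (Set.range θ) with hP
    let θ' : X →+ P :=
      { toFun := fun x => ⟨θ x, Submodule.subset_span ⟨x, rfl⟩⟩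
        map_zero' := by refine Subtype.ext ?_; simp
        map_add' := by intro x y; refine Subtype.ext ?_; simp }
    have hθ' : ∀ (a : Λ) (x : X), θ' (a • x) = ιB.toRingHom a • θ' x := by
      intro a x
      refine Subtype.ext ?_
      exact hN.semilinear a x
    obtain ⟨F', hF', -⟩ := hN.universal P θ' hθ'
    have h1 : P.subtype ∘ₗ F' = F0 := hFuniq _ (fun x => by
      simp only [LinearMap.comp_apply, hF']; rfl)
    have h2 : (LinearMap.id : N →ₗ[B] N) = F0 := hFuniq _ (fun x => rfl)
    intro n
    have h3 : P.subtype (F' n) = n := by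
      have e1 := LinearMap.congr_fun h1 n
      have e2 := LinearMap.congr_fun h2 n
      simpa using e1.trans e2.symm
    rw [← h3]
    exact (F' n).2
  have hterm : ∀ (b : B) (x : X),
      ∃ y : ↥H → X, b • θ x = ∑ h : ↥H, (uB h : B) • θ (y h) := by
    intro b x
    obtain ⟨c, hc, -⟩ := hB.free b
    refine ⟨fun h => c h • x, ?_⟩
    have hterm1 : ∀ h : ↥H, (uB h : B) • θ (c h • x) = ((uB h : B) * ιB (c h)) • θ x := by
      intro h
      rw [hN.semilinear, smul_smul]
      rfl
    simp only [hterm1]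
    rw [hc, Finsupp.sum, Finset.sum_smul]
    exact Finset.sum_subset (Finset.subset_univ _) (fun h _ hh => by
      rw [Finsupp.notMem_support_iff.mp hh, map_zero, mul_zero, zero_smul])
  have hrep : ∀ n : N, ∃ x : ↥H → X, n = ∑ h : ↥H, (uB h : B) • θ (x h) := by
    intro n
    have hn := hspan n
    induction hn using Submodule.span_induction with
    | mem v hv =>
      obtain ⟨x0, rfl⟩ := hv
      refine ⟨fun h => if h = 1 then x0 else 0, ?_⟩
      rw [Finset.sum_eq_single_of_mem (1 : ↥H) (Finset.mem_univ _)
        (fun h _ hne => by simp [hne])]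
      simp
    | zero => exact ⟨0, by simp⟩
    | add v w hv hw ihv ihw =>
      obtain ⟨a, ha⟩ := ihv
      obtain ⟨b, hb⟩ := ihw
      refine ⟨a + b, ?_⟩
      rw [ha, hb, ← Finset.sum_add_distrib]
      refine Finset.sum_congr rfl fun h _ => ?_
      rw [Pi.add_apply, map_add, smul_add]
    | smul b m hm ihm =>
      obtain ⟨x, hx⟩ := ihm
      choose y hy using fun h : ↥H => hterm (b * (uB h : B)) (x h)
      refine ⟨fun g => ∑ h : ↥H, y h g, ?_⟩
      rw [hx, Finset.smul_sum]
      have hstep : ∀ h : ↥H, b • ((uB h : B) • θ (x h)) = ∑ g : ↥H, (uB g : B) • θ (y h g) := by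
        intro h
        rw [smul_smul]
        exact hy h
      rw [Finset.sum_congr rfl fun h _ => hstep h, Finset.sum_comm]
      refine Finset.sum_congr rfl fun g _ => ?_
      rw [map_sum, Finset.smul_sum]
  -- surjectivity
  have hsingle : ∀ (i0 : Fin r) (u : Xρ i0), Pi.single i0 u ∈ LinearMap.range F := by
    intro i0 u
    have hw : (∑ h : ↥H, algebraMap k B (((χ i0 h)⁻¹ : kˣ) : k) •
          F ((uB h : B) • θ ((uB h⁻¹ : B) • e i0 u)))
        = algebraMap k B ((Fintype.card ↥H : ℕ) : k) • Pi.single i0 u := by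
      funext i
      rw [Finset.sum_apply]
      have hterm2 : ∀ h : ↥H, (algebraMap k B (((χ i0 h)⁻¹ : kˣ) : k) •
          F ((uB h : B) • θ ((uB h⁻¹ : B) • e i0 u))) i
          = algebraMap k B ((((χ i0 h)⁻¹ * χ i h : kˣ)) : k) • (e i).symm (e i0 u) := by
        intro h
        have hx2 : (uB h : B) • ((uB h⁻¹ : B) • e i0 u) = e i0 u := by
          rw [smul_smul, ← Units.val_mul, ← map_mul]
          simp
        rw [Pi.smul_apply, key, hx2, smul_smul, ← map_mul, Units.val_mul]
      simp only [hterm2]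
      rw [← Finset.sum_smul, ← map_sum]
      by_cases hii : i = i0
      · have h1 : ∀ h : ↥H, (((χ i0 h)⁻¹ * χ i h : kˣ) : k) = 1 := fun h => by
          rw [hii, inv_mul_cancel]; rfl
        rw [Finset.sum_congr rfl fun h _ => h1 h, Finset.sum_const, Finset.card_univ,
          nsmul_eq_mul, mul_one, Pi.smul_apply, hii, Pi.single_eq_same,
          (e i0).symm_apply_apply]
      · have hne : (χ i0)⁻¹ * χ i ≠ 1 := fun hcon =>
          hii (hχ (inv_mul_eq_one.mp hcon).symm)
        have hsum0 : ∑ h : ↥H, ((((χ i0)⁻¹ * χ i) h : kˣ) : k) = 0 :=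
          sum_units_char_eq_zero _ hne
        have heq : ∀ h : ↥H, (((χ i0 h)⁻¹ * χ i h : kˣ) : k)
            = ((((χ i0)⁻¹ * χ i) h : kˣ) : k) := fun h => rfl
        rw [Finset.sum_congr rfl fun h _ => heq h, hsum0, map_zero, zero_smul,
          Pi.smul_apply, Pi.single_eq_of_ne hii, smul_zero]
    have hwmem : (∑ h : ↥H, algebraMap k B (((χ i0 h)⁻¹ : kˣ) : k) •
          F ((uB h : B) • θ ((uB h⁻¹ : B) • e i0 u))) ∈ LinearMap.range F :=
      Submodule.sum_mem _ fun h _ =>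
        Submodule.smul_mem _ _ (LinearMap.mem_range_self F _)
    rw [hw] at hwmem
    have hmem2 := Submodule.smul_mem _ (algebraMap k B (((Fintype.card ↥H : ℕ) : k)⁻¹)) hwmem
    rw [smul_smul, ← map_mul, inv_mul_cancel₀ hcardH, map_one, one_smul] at hmem2
    exact hmem2
  have hsurj : Function.Surjective F := by
    intro y
    have hy : y ∈ LinearMap.range F := by
      rw [← Finset.univ_sum_single y]
      exact Submodule.sum_mem _ fun i _ => hsingle i (y i)
    exact hy
  -- injectivity
  have hrpos : 0 < r := by rw [hrH]; exact Fintype.card_pos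
  haveI : Nonempty (Fin r) := ⟨⟨0, hrpos⟩⟩
  have hinjψ : Function.Injective (fun i : Fin r => (Units.coeHom k).comp (χ i)) := by
    intro i j hij
    apply hχ
    ext h
    exact DFunLike.congr_fun hij h
  have li : LinearIndependent k (fun i : Fin r => ⇑((Units.coeHom k).comp (χ i))) :=
    (linearIndependent_monoidHom ↥H k).comp _ hinjψ
  have hcardeq : Fintype.card (Fin r) = Module.finrank k (↥H → k) := by
    rw [Fintype.card_fin, Module.finrank_fintype_fun_eq_card, hrH]
  let bas := basisOfLinearIndependentOfCardEqFinrank li hcardeq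
  have hbas : ⇑bas = fun i : Fin r => ⇑((Units.coeHom k).comp (χ i)) :=
    coe_basisOfLinearIndependentOfCardEqFinrank li hcardeq
  have hker : ∀ n : N, F n = 0 → n = 0 := by
    intro n hFn
    obtain ⟨x, rfl⟩ := hrep n
    set z : ↥H → X := fun h => (uB h : B) • x h with hz
    have hzeq : ∀ i : Fin r, ∑ h : ↥H, ((χ i h : kˣ) : k) • z h = 0 := by
      intro i
      have hcomp : F (∑ h : ↥H, (uB h : B) • θ (x h)) i
          = (e i).symm (∑ h : ↥H, ((χ i h : kˣ) : k) • z h) := by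
        rw [map_sum, Finset.sum_apply, map_sum]
        refine Finset.sum_congr rfl fun h _ => ?_
        rw [key, ← hkX, hesymmk]
      have h0 : (e i).symm (∑ h : ↥H, ((χ i h : kˣ) : k) • z h) = 0 := by
        rw [← hcomp, hFn]; rfl
      have h1 := congrArg (e i) h0
      rw [(e i).apply_symm_apply, map_zero] at h1
      exact h1
    have hz0 : ∀ h0 : ↥H, z h0 = 0 := by
      intro h0
      have hrepr : ∑ i : Fin r, bas.repr ((Pi.single h0 1 : ↥H → k)) i • bas i
          = (Pi.single h0 1 : ↥H → k) := bas.sum_repr _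
      have hdelta : z h0 = ∑ h : ↥H, (Pi.single h0 1 : ↥H → k) h • z h := by
        rw [Finset.sum_eq_single_of_mem h0 (Finset.mem_univ _) (fun h _ hne => by
          rw [Pi.single_eq_of_ne hne, zero_smul])]
        rw [Pi.single_eq_same, one_smul]
      rw [hdelta, ← hrepr]
      have hex : ∀ h : ↥H,
          ((∑ i : Fin r, bas.repr ((Pi.single h0 1 : ↥H → k)) i • bas i) h) • z h
          = ∑ i : Fin r, bas.repr ((Pi.single h0 1 : ↥H → k)) i • (((χ i h : kˣ) : k) • z h) := by
        intro h
        rw [Finset.sum_apply, Finset.sum_smul]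
        refine Finset.sum_congr rfl fun i _ => ?_
        rw [Pi.smul_apply, hbas, smul_eq_mul, mul_smul]
        rfl
      rw [Finset.sum_congr rfl fun h _ => hex h, Finset.sum_comm]
      refine Finset.sum_eq_zero fun i _ => ?_
      rw [← Finset.smul_sum, hzeq, smul_zero]
    have hx0 : ∀ h : ↥H, x h = 0 := by
      intro h
      have h1 : (((uB h)⁻¹ : Bˣ) : B) • ((uB h : B) • x h) = x h := by
        rw [smul_smul, ← Units.val_mul, inv_mul_cancel, Units.val_one, one_smul]
      have h3 : (uB h : B) • x h = 0 := hz0 h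
      calc x h = (((uB h)⁻¹ : Bˣ) : B) • ((uB h : B) • x h) := h1.symm
        _ = 0 := by rw [h3, smul_zero]
    refine Finset.sum_eq_zero fun h _ => ?_
    rw [hx0 h, map_zero, smul_zero]
  have hinj : Function.Injective F := by
    intro a b hab
    have hs : a - b = 0 := hker _ (by rw [map_sub, hab, sub_self])
    exact sub_eq_zero.mp hs
  exact ⟨LinearEquiv.ofBijective F ⟨hinj, hsurj⟩⟩
end

section
/- Assume Condition C. Then for any ΛH_X-module Y such that Y ≅ X as Λ-modules, there exists a unique i ∈ {1,…,r} with Y ≅ ρ_i ⊗_k X as ΛH_X-modules. Hence there are exactly r pairwise non-isomorphic ΛH_X-module structures induced on X. -/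
/-!
`End_Λ X` is a local ring (Fitting's lemma) with residue field `k` (eigenvalues exist since `k` is
algebraically closed); write `λ` for its residue map. Transporting the `H`-action of `Y` to `X`
along a `Λ`-isomorphism `F` and comparing it with the `H`-action of `X` gives `Λ`-automorphisms
`T_g = u_g⁻¹ F u_g F⁻¹` with `T_{hg} = (u_g⁻¹ T_h u_g) T_g`. As `λ` is invariant under conjugation
by `u_g`, `χ(g) = λ(T_g)` is a character, and the average `Σ_g χ(g⁻¹) T_g` has residue `|H| ≠ 0`,
so it is an isomorphism from `Y` to the twist `ρ_χ ⊗ X`. Conversely, a `Λ`-automorphism `θ` of `X`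
with `u_g⁻¹ θ u_g = ψ(g) θ` forces `ψ(g) = 1` after applying `λ`, so `χ` is unique. Finally, by
Dedekind's independence of characters, `H` has at most `|H|` characters, so the `r = |H|` given
ones are all of them.
-/

open Function

noncomputable section

namespace IsIndec

section Fitting

variable {R M : Type} [Ring R] [AddCommGroup M] [Module R M] [IsNoetherian R M] [IsArtinian R M]

theorem isNilpotent_or_isUnit (hM : IsIndec R M) (T : Module.End R M) :
    IsNilpotent T ∨ IsUnit T := by
  obtain ⟨n, hcompl, hn⟩ :=
    (T.eventually_isCompl_ker_pow_range_pow.and (Filter.eventually_ne_atTop 0)).exists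
  refine (hM.2 _ _ hcompl).symm.imp (fun h => ⟨n, LinearMap.range_eq_bot.1 h⟩) fun h => ?_
  rw [← isUnit_pow_iff hn, Module.End.isUnit_iff]
  exact IsArtinian.bijective_of_injective_endomorphism _ (LinearMap.ker_eq_bot.1 h)

theorem isLocalRing (hM : IsIndec R M) : IsLocalRing (Module.End R M) :=
  have : Nontrivial M := hM.1
  .of_isUnit_or_isUnit_one_sub_self fun T =>
    (hM.isNilpotent_or_isUnit T).symm.imp_right IsNilpotent.isUnit_one_sub

end Fitting

section ScalarPart

variable {k Λ X : Type} [Field k] [Ring Λ] [Algebra k Λ] [AddCommGroup X] [Module Λ X]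
  [Module k X] [IsScalarTower k Λ X] [FiniteDimensional k X]

theorem exists_not_isUnit_sub_algebraMap [IsAlgClosed k] (hX : IsIndec Λ X)
    (T : Module.End Λ X) : ∃ μ : k, ¬IsUnit (T - algebraMap k _ μ) := by
  have : Nontrivial X := hX.1
  obtain ⟨μ, hμ⟩ := Module.End.exists_eigenvalue (T.restrictScalars k)
  obtain ⟨v, hv⟩ := hμ.exists_hasEigenvector
  refine ⟨μ, fun hunit => hv.2 (((Module.End.isUnit_iff _).1 hunit).injective ?_)⟩
  simpa [sub_eq_zero] using hv.apply_eq_smul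

theorem eq_of_not_isUnit_sub_algebraMap (hX : IsIndec Λ X) {T : Module.End Λ X} {μ ν : k}
    (hμ : ¬IsUnit (T - algebraMap k _ μ)) (hν : ¬IsUnit (T - algebraMap k _ ν)) : μ = ν := by
  have : IsNoetherian Λ X := isNoetherian_of_tower k inferInstance
  have : IsArtinian Λ X := isArtinian_of_tower k inferInstance
  have := hX.isLocalRing
  by_contra hne
  refine IsLocalRing.nonunits_add hν ((IsUnit.neg_iff _).not.2 hμ) ?_
  rw [← sub_eq_add_neg, sub_sub_sub_cancel_left, ← map_sub]
  exact (IsUnit.mk0 _ (sub_ne_zero.2 hne)).map _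

variable [IsAlgClosed k]

variable (k) in
/-- The residue map of the local `k`-algebra `End_Λ X`, whose residue field is `k`. -/
def scalarPart (hX : IsIndec Λ X) : Module.End Λ X →ₐ[k] k :=
  haveI : Nontrivial X := hX.1
  haveI : IsNoetherian Λ X := isNoetherian_of_tower k inferInstance
  haveI : IsArtinian Λ X := isArtinian_of_tower k inferInstance
  haveI : IsArtinianRing (Module.End Λ X) := .of_finite k _
  haveI := hX.isLocalRing
  let μ T := (hX.exists_not_isUnit_sub_algebraMap T).choose
  have hμ T : ¬IsUnit (T - algebraMap k _ (μ T)) :=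
    (hX.exists_not_isUnit_sub_algebraMap T).choose_spec
  have eq {T ν} (h : ¬IsUnit (T - algebraMap k _ ν)) : μ T = ν :=
    hX.eq_of_not_isUnit_sub_algebraMap (hμ T) h
  { toFun := μ
    map_one' := eq (by simp)
    map_mul' A B := eq <| by
      have hdecomp : A * B - algebraMap k _ (μ A * μ B) =
          (A - algebraMap k _ (μ A)) * B + algebraMap k _ (μ A) * (B - algebraMap k _ (μ B)) := by
        rw [map_mul]
        noncomm_ring
      rw [hdecomp]
      exact IsLocalRing.nonunits_add (fun h => hμ A (isUnit_of_mul_isUnit_left h))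
        (fun h => hμ B (isUnit_of_mul_isUnit_right h))
    map_zero' := eq (by simp)
    map_add' A B := eq <| by
      rw [map_add, add_sub_add_comm]
      exact IsLocalRing.nonunits_add (hμ A) (hμ B)
    commutes' ν := eq (by simp) }

theorem not_isUnit_sub_scalarPart (hX : IsIndec Λ X) (T : Module.End Λ X) :
    ¬IsUnit (T - algebraMap k _ (hX.scalarPart k T)) :=
  (hX.exists_not_isUnit_sub_algebraMap T).choose_spec

theorem scalarPart_eq_iff (hX : IsIndec Λ X) {T : Module.End Λ X} {μ : k} :
    hX.scalarPart k T = μ ↔ ¬IsUnit (T - algebraMap k _ μ) :=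
  ⟨fun h => h ▸ hX.not_isUnit_sub_scalarPart T,
    hX.eq_of_not_isUnit_sub_algebraMap (hX.not_isUnit_sub_scalarPart T)⟩

theorem scalarPart_ne_zero_iff (hX : IsIndec Λ X) {T : Module.End Λ X} :
    hX.scalarPart k T ≠ 0 ↔ IsUnit T := by
  rw [Ne, scalarPart_eq_iff, map_zero, sub_zero, not_not]

theorem scalarPart_eq_of_semiconj (hX : IsIndec Λ X) {A A' : Module.End Λ X} (e : X ≃+ X)
    (he : ∀ (c : k) (x : X), e (c • x) = c • e x) (h : ∀ x, e (A x) = A' (e x)) :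
    hX.scalarPart k A' = hX.scalarPart k A := by
  refine hX.scalarPart_eq_iff.2 fun hunit => hX.not_isUnit_sub_scalarPart (k := k) A ?_
  rw [Module.End.isUnit_iff] at hunit ⊢
  convert e.symm.bijective.comp (hunit.comp e.bijective) using 1
  ext x
  simp [Module.algebraMap_end_apply, ← h, ← he]

end ScalarPart

end IsIndec

section SkewGroupAlgebra

variable {k Λ H B : Type} [Field k] [Ring Λ] [Algebra k Λ] [Group H] [Ring B] [Algebra k B]
  {φ : H →* (Λ ≃ₐ[k] Λ)} {ι : Λ →ₐ[k] B} {u : H →* Bˣ}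
  {X Y Z : Type} [AddCommGroup X] [Module B X] [AddCommGroup Y] [Module B Y]
  [AddCommGroup Z] [Module B Z]

namespace IsSkewGroupAlgebra

theorem units_smul_ι_smul (hB : IsSkewGroupAlgebra φ B ι u) (g : H) (a : Λ) (x : X) :
    u g • ι a • x = ι (φ g a) • u g • x := by
  rw [Units.smul_def, Units.smul_def, ← mul_smul, hB.skew_comm, mul_smul]

theorem ι_smul_units_inv_smul (hB : IsSkewGroupAlgebra φ B ι u) (g : H) (a : Λ) (x : X) :
    ι a • (u g)⁻¹ • x = (u g)⁻¹ • ι (φ g a) • x := by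
  rw [eq_inv_smul_iff, hB.units_smul_ι_smul, smul_inv_smul]

def mkLinearMap (hB : IsSkewGroupAlgebra φ B ι u) (f : X →+ Y)
    (hι : ∀ (a : Λ) (x : X), f (ι a • x) = ι a • f x)
    (hu : ∀ (g : H) (x : X), f (u g • x) = u g • f x) : X →ₗ[B] Y where
  toFun := f
  map_add' := f.map_add
  map_smul' b x := by
    obtain ⟨c, rfl, -⟩ := hB.free b
    simp only [Finsupp.sum, Finset.sum_smul, map_sum, mul_smul, ← Units.smul_def, hu, hι,
      RingHom.id_apply]

end IsSkewGroupAlgebra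

theorem map_algebraMap_smul_of_map_ι_smul {f : X → Y}
    (hι : ∀ (a : Λ) (x : X), f (ι a • x) = ι a • f x) (c : k) (x : X) :
    f (algebraMap k B c • x) = algebraMap k B c • f x := by
  rw [← ι.commutes, hι]

theorem symm_map_ι_smul_of_map_ι_smul {e : Y ≃+ X}
    (hι : ∀ (a : Λ) (y : Y), e (ι a • y) = ι a • e y) (a : Λ) (x : X) :
    e.symm (ι a • x) = ι a • e.symm x :=
  e.symm_apply_eq.2 (by rw [hι, e.apply_symm_apply])

namespace IsCharTwist

variable {χ χ₁ χ₂ : H →* kˣ}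

theorem symm (h : IsCharTwist ι u χ X Y) : IsCharTwist ι u χ⁻¹ Y X := by
  obtain ⟨e, hι, hu⟩ := h
  refine ⟨e.symm, symm_map_ι_smul_of_map_ι_smul hι, fun g x => e.symm_apply_eq.2 ?_⟩
  rw [map_algebraMap_smul_of_map_ι_smul hι, hu, e.apply_symm_apply, smul_smul, ← map_mul,
    MonoidHom.inv_apply, ← Units.val_mul, inv_mul_cancel, Units.val_one, map_one, one_smul]

theorem trans (h₁ : IsCharTwist ι u χ₁ X Y) (h₂ : IsCharTwist ι u χ₂ Y Z) :
    IsCharTwist ι u (χ₁ * χ₂) X Z := by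
  obtain ⟨e₁, hι₁, hu₁⟩ := h₁
  obtain ⟨e₂, hι₂, hu₂⟩ := h₂
  refine ⟨e₂.trans e₁, fun a z => by simp [hι₁, hι₂], fun g z => ?_⟩
  simp only [AddEquiv.trans_apply, hu₂, map_algebraMap_smul_of_map_ι_smul hι₁, hu₁, smul_smul,
    ← map_mul, MonoidHom.mul_apply, Units.val_mul, mul_comm]

theorem comp_linearEquiv (h : IsCharTwist ι u χ X Z) (e : Y ≃ₗ[B] Z) : IsCharTwist ι u χ X Y := by
  obtain ⟨e', hι, hu⟩ := h
  exact ⟨e.toAddEquiv.trans e', fun a y => by simp [hι],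
    fun g y => by simpa [Units.smul_def] using hu g (e y)⟩

theorem nonempty_linearEquiv (hB : IsSkewGroupAlgebra φ B ι u) (h₁ : IsCharTwist ι u χ X Y)
    (h₂ : IsCharTwist ι u χ X Z) : Nonempty (Y ≃ₗ[B] Z) := by
  obtain ⟨e, hι, hu⟩ := h₂.symm.trans h₁
  simp only [MonoidHom.mul_apply, MonoidHom.inv_apply, inv_mul_cancel, Units.val_one, map_one,
    one_smul] at hu
  exact ⟨.ofBijective (hB.mkLinearMap e.toAddMonoidHom hι hu) e.bijective⟩

end IsCharTwist

end SkewGroupAlgebra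

section Twisting

variable {k Λ H B : Type} [Field k] [Ring Λ] [Algebra k Λ] [Group H] [Ring B] [Algebra k B]
  {φ : H →* (Λ ≃ₐ[k] Λ)} {ι : Λ →ₐ[k] B} {u : H →* Bˣ}
  {X Y : Type} [AddCommGroup X] [Module Λ X] [Module B X] [AddCommGroup Y] [Module B Y]

theorem algebraMap_smul_eq_smul [Module k X] [IsScalarTower k Λ X]
    (hBX : ∀ (a : Λ) (x : X), ι a • x = a • x) (c : k) (x : X) :
    algebraMap k B c • x = c • x := by
  rw [← ι.commutes, hBX, algebraMap_smul]

theorem units_smul_smul_comm [Module k X] [IsScalarTower k Λ X]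
    (hBX : ∀ (a : Λ) (x : X), ι a • x = a • x) (v : Bˣ) (c : k) (x : X) :
    v • c • x = c • v • x := by
  rw [← algebraMap_smul_eq_smul hBX, ← algebraMap_smul_eq_smul hBX, Units.smul_def,
    Units.smul_def, ← mul_smul, ← Algebra.commutes, mul_smul]

variable (hB : IsSkewGroupAlgebra φ B ι u) (hBX : ∀ (a : Λ) (x : X), ι a • x = a • x)

def conjUnit (g : H) (A : Module.End Λ X) : Module.End Λ X where
  toFun x := (u g)⁻¹ • A (u g • x)
  map_add' x y := by rw [smul_add, map_add, smul_add]
  map_smul' a x := by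
    rw [RingHom.id_apply, ← hBX a x, hB.units_smul_ι_smul, hBX, map_smul, ← hBX,
      ← hB.ι_smul_units_inv_smul, hBX]

theorem conjUnit_apply (g : H) (A : Module.End Λ X) (x : X) :
    conjUnit hB hBX g A x = (u g)⁻¹ • A (u g • x) := rfl

variable {F : Y ≃+ X} (hF : ∀ (a : Λ) (y : Y), F (ι a • y) = ι a • F y)

/-- `u_g⁻¹ ∘ (u_g acting on Y, transported to X along F)`: both factors are `φ g`-semilinear,
so the composite is `Λ`-linear. -/
def twistCocycle (g : H) : Module.End Λ X where
  toFun x := (u g)⁻¹ • F (u g • F.symm x)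
  map_add' x y := by rw [map_add, smul_add, map_add, smul_add]
  map_smul' a x := by
    rw [RingHom.id_apply, ← hBX a x, symm_map_ι_smul_of_map_ι_smul hF, hB.units_smul_ι_smul, hF,
      ← hB.ι_smul_units_inv_smul, hBX]

theorem units_smul_twistCocycle (g : H) (x : X) :
    u g • twistCocycle hB hBX hF g x = F (u g • F.symm x) :=
  smul_inv_smul _ _

theorem twistCocycle_units_smul_twistCocycle (g h : H) (x : X) :
    twistCocycle hB hBX hF h (u g • twistCocycle hB hBX hF g x)
      = u g • twistCocycle hB hBX hF (h * g) x := by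
  rw [units_smul_twistCocycle]
  show (u h)⁻¹ • F (u h • F.symm (F _)) = _
  rw [F.symm_apply_apply, smul_smul, ← map_mul, ← units_smul_twistCocycle hB hBX hF,
    map_mul, mul_smul, inv_smul_smul]

theorem twistCocycle_mul (g h : H) :
    twistCocycle hB hBX hF (h * g) = conjUnit hB hBX g (twistCocycle hB hBX hF h)
      * twistCocycle hB hBX hF g := by
  ext x
  rw [Module.End.mul_apply, conjUnit_apply, twistCocycle_units_smul_twistCocycle, inv_smul_smul]

theorem twistCocycle_one : twistCocycle hB hBX hF 1 = 1 := by
  ext x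
  show (u 1)⁻¹ • F (u 1 • F.symm x) = x
  simp

variable [Module k X] [IsScalarTower k Λ X] [FiniteDimensional k X] [IsAlgClosed k]
  (hX : IsIndec Λ X)

theorem scalarPart_conjUnit (g : H) (A : Module.End Λ X) :
    hX.scalarPart k (conjUnit hB hBX g A) = hX.scalarPart k A :=
  (hX.scalarPart_eq_of_semiconj (DistribMulAction.toAddEquiv X (u g))
    (units_smul_smul_comm hBX (u g)) fun _ => smul_inv_smul (u g) _).symm

def twistCharacter : H →* kˣ :=
  MonoidHom.toHomUnits
    { toFun g := hX.scalarPart k (twistCocycle hB hBX hF g)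
      map_one' := by rw [twistCocycle_one, map_one]
      map_mul' g h := by rw [twistCocycle_mul hB hBX hF h g, map_mul, scalarPart_conjUnit] }

theorem twistCharacter_apply (g : H) :
    (twistCharacter hB hBX hF hX g : k) = hX.scalarPart k (twistCocycle hB hBX hF g) := rfl

def averagedTwist [Fintype H] : Module.End Λ X :=
  ∑ g, (twistCharacter hB hBX hF hX g⁻¹ : k) • twistCocycle hB hBX hF g

theorem scalarPart_averagedTwist [Fintype H] :
    hX.scalarPart k (averagedTwist hB hBX hF hX) = Fintype.card H := by
  simp [averagedTwist, ← twistCharacter_apply]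

theorem averagedTwist_apply [Fintype H] (x : X) :
    averagedTwist hB hBX hF hX x
      = ∑ g, (twistCharacter hB hBX hF hX g⁻¹ : k) • twistCocycle hB hBX hF g x := by
  simp only [averagedTwist, LinearMap.sum_apply, LinearMap.smul_apply]

theorem averagedTwist_units_smul_twistCocycle [Fintype H] (g : H) (x : X) :
    averagedTwist hB hBX hF hX (u g • twistCocycle hB hBX hF g x)
      = (twistCharacter hB hBX hF hX g : k) • u g • averagedTwist hB hBX hF hX x := by
  set χ := twistCharacter hB hBX hF hX
  set T := twistCocycle hB hBX hF
  have hshift : ∑ h, (χ h⁻¹ : k) • T (h * g) x = (χ g : k) • ∑ h, (χ h⁻¹ : k) • T h x := by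
    rw [Finset.smul_sum]
    exact Fintype.sum_equiv (Equiv.mulRight g) _ _ fun h => by
      simp [smul_smul, ← Units.val_mul, ← map_mul]
  calc averagedTwist hB hBX hF hX (u g • T g x)
      = ∑ h, (χ h⁻¹ : k) • u g • T (h * g) x := by
        simp only [averagedTwist_apply, T, χ, twistCocycle_units_smul_twistCocycle]
    _ = u g • ∑ h, (χ h⁻¹ : k) • T (h * g) x := by
        simp only [Finset.smul_sum, units_smul_smul_comm hBX]
    _ = (χ g : k) • u g • averagedTwist hB hBX hF hX x := by
        rw [hshift, averagedTwist_apply, units_smul_smul_comm hBX]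

theorem isCharTwist_twistCharacter [Fintype H] (hcard : (Fintype.card H : k) ≠ 0) :
    IsCharTwist ι u (twistCharacter hB hBX hF hX) X Y := by
  set Φ := averagedTwist hB hBX hF hX
  have hΦ : Bijective Φ := (Module.End.isUnit_iff Φ).1
    (hX.scalarPart_ne_zero_iff.1 (by rwa [scalarPart_averagedTwist]))
  refine ⟨F.trans (AddEquiv.ofBijective Φ.toAddMonoidHom hΦ), fun a y => ?_, fun g y => ?_⟩
  · show Φ (F (ι a • y)) = ι a • Φ (F y)
    rw [hF, hBX, map_smul, hBX]
  · have hFu : F (u g • y) = u g • twistCocycle hB hBX hF g (F y) := by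
      rw [units_smul_twistCocycle, F.symm_apply_apply]
    show Φ (F (u g • y)) = algebraMap k B (twistCharacter hB hBX hF hX g : k) • u g • Φ (F y)
    rw [hFu, averagedTwist_units_smul_twistCocycle, algebraMap_smul_eq_smul hBX]

end Twisting

namespace IsCharTwist

variable {k Λ H B : Type} [Field k] [IsAlgClosed k] [Ring Λ] [Algebra k Λ] [Group H] [Ring B]
  [Algebra k B] {φ : H →* (Λ ≃ₐ[k] Λ)} {ι : Λ →ₐ[k] B} {u : H →* Bˣ}
  {X Y : Type} [AddCommGroup X] [Module Λ X] [Module k X] [IsScalarTower k Λ X]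
  [FiniteDimensional k X] [Module B X] [AddCommGroup Y] [Module B Y]

theorem eq_one_of_self (hX : IsIndec Λ X) (hB : IsSkewGroupAlgebra φ B ι u)
    (hBX : ∀ (a : Λ) (x : X), ι a • x = a • x) {ψ : H →* kˣ} (h : IsCharTwist ι u ψ X X) :
    ψ = 1 := by
  obtain ⟨e, hι, hu⟩ := h
  let θ : Module.End Λ X :=
    { e.toAddMonoidHom with map_smul' a x := by simpa [hBX] using hι a x }
  have hθ : hX.scalarPart k θ ≠ 0 :=
    hX.scalarPart_ne_zero_iff.2 ((Module.End.isUnit_iff θ).2 e.bijective)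
  ext g
  have hconj : conjUnit hB hBX g θ = (ψ g : k) • θ := by
    ext x
    simp [conjUnit_apply, θ, hu, algebraMap_smul_eq_smul hBX, units_smul_smul_comm hBX]
  have := congrArg (hX.scalarPart k) hconj
  rw [scalarPart_conjUnit, map_smul, smul_eq_mul] at this
  simpa [hθ] using this

theorem unique (hX : IsIndec Λ X) (hB : IsSkewGroupAlgebra φ B ι u)
    (hBX : ∀ (a : Λ) (x : X), ι a • x = a • x) {χ₁ χ₂ : H →* kˣ}
    (h₁ : IsCharTwist ι u χ₁ X Y) (h₂ : IsCharTwist ι u χ₂ X Y) : χ₁ = χ₂ :=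
  mul_inv_eq_one.1 ((h₁.trans h₂.symm).eq_one_of_self hX hB hBX)

end IsCharTwist

theorem characters_surjective_of_injective {H k : Type} [Monoid H] [Finite H] [Field k] {r : ℕ}
    (hr : r = Nat.card H) {χ : Fin r → (H →* kˣ)} (hχ : Injective χ) : Surjective χ := by
  have hli : LinearIndependent k fun ψ : H →* kˣ => ((Units.coeHom k).comp ψ : H → k) :=
    (linearIndependent_monoidHom H k).comp _
      fun ψ ψ' h => MonoidHom.ext fun x => Units.ext (DFunLike.congr_fun h x)
  have hcard : Cardinal.mk (H →* kˣ) ≤ Cardinal.mk H := by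
    simpa using hli.cardinalMk_le_finrank
  have : Finite (H →* kˣ) :=
    Cardinal.lt_aleph0_iff_finite.1 (hcard.trans_lt (Cardinal.lt_aleph0_of_finite H))
  refine (hχ.bijective_of_nat_card_le ?_).2
  rw [Nat.card_fin, hr]
  exact Cardinal.toNat_le_toNat hcard (Cardinal.lt_aleph0_of_finite H)

end

theorem HX_module_structures_on_X_general
    (k Λ G : Type) [Field k] [IsAlgClosed k] [Ring Λ] [Algebra k Λ]
    [Group G] [Fintype G] (hchar : (Fintype.card G : k) ≠ 0)
    (φ : G →* (Λ ≃ₐ[k] Λ))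
    -- Condition C : X is a finite dimensional indecomposable Λ-module with H_X abelian
    (X : Type) [AddCommGroup X] [Module Λ X] [Module k X] [IsScalarTower k Λ X]
    [FiniteDimensional k X] (hX : IsIndec Λ X)
    (H : Subgroup G)
    -- the skew group algebra ΛH_X
    (B : Type) [Ring B] [Algebra k B] (ιB : Λ →ₐ[k] B) (uB : H →* Bˣ)
    (hB : IsSkewGroupAlgebra (φ.comp H.subtype) B ιB uB)
    -- the ΛH_X-module structure on X (extending its Λ-module structure)
    [Module B X] (hBX : ∀ (a : Λ) (x : X), ιB a • x = a • x)
    -- the r = |H_X| pairwise distinct characters of H_X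
    (r : ℕ) (hr : r = Nat.card H)
    (χ : Fin r → (H →* kˣ)) (hχ : Function.Injective χ)
    -- the ΛH_X-modules ρ_i ⊗_k X
    (Xρ : Fin r → Type) [∀ i, AddCommGroup (Xρ i)] [∀ i, Module B (Xρ i)]
    (hXρ : ∀ i, IsCharTwist ιB uB (χ i) X (Xρ i))
    (Y : Type) [AddCommGroup Y] [Module B Y]
    (hY : Nonempty (Res ιB Y ≃ₗ[Λ] X)) :
    ∃! i : Fin r, Nonempty (Y ≃ₗ[B] Xρ i) := by
  classical
  obtain ⟨f⟩ := hY
  have hcard : (Fintype.card H : k) ≠ 0 := fun h => hchar <| by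
    obtain ⟨m, hm⟩ := H.card_subgroup_dvd_card
    rw [← Nat.card_eq_fintype_card, hm, Nat.cast_mul, Nat.card_eq_fintype_card, h, zero_mul]
  set F : Y ≃+ X := f.toAddEquiv
  have hF (a : Λ) (y : Y) : F (ιB a • y) = ιB a • F y := (f.map_smul a y).trans (hBX _ _).symm
  have hψ := isCharTwist_twistCharacter hB hBX hF hX hcard
  obtain ⟨i, hi⟩ := characters_surjective_of_injective hr hχ (twistCharacter hB hBX hF hX)
  refine ⟨i, hψ.nonempty_linearEquiv hB (hi ▸ hXρ i), fun j ⟨e⟩ => hχ ?_⟩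
  exact hi ▸ ((hXρ j).comp_linearEquiv e).unique hX hB hBX hψ

/-- **Lemma 2.5(4).** Assume Condition C.  Every `ΛH_X`-module `Y` with `Y ≅ X` as
`Λ`-modules is isomorphic, as a `ΛH_X`-module, to `ρ_i ⊗_k X` for a unique `i`.
Hence there are exactly `r` pairwise non-isomorphic `ΛH_X`-module structures on `X`. -/
theorem HX_module_structures_on_X
    (k Λ G : Type) [Field k] [IsAlgClosed k] [Ring Λ] [Algebra k Λ]
    [Group G] [Fintype G] (hchar : (Fintype.card G : k) ≠ 0)
    (φ : G →* (Λ ≃ₐ[k] Λ))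
    -- Condition C : X is a finite dimensional indecomposable Λ-module with H_X abelian
    (X : Type) [AddCommGroup X] [Module Λ X] [Module k X] [IsScalarTower k Λ X]
    [FiniteDimensional k X] (hX : IsIndec Λ X)
    (H : Subgroup G) (hH : (H : Set G) = Hset φ X)
    (hab : ∀ a b : H, a * b = b * a)
    -- the skew group algebra ΛH_X
    (B : Type) [Ring B] [Algebra k B] (ιB : Λ →ₐ[k] B) (uB : H →* Bˣ)
    (hB : IsSkewGroupAlgebra (φ.comp H.subtype) B ιB uB)
    -- the ΛH_X-module structure on X (extending its Λ-module structure)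
    [Module B X] (hBX : ∀ (a : Λ) (x : X), ιB a • x = a • x)
    -- the r = |H_X| pairwise distinct characters of H_X
    (r : ℕ) (hr : r = Nat.card H)
    (χ : Fin r → (H →* kˣ)) (hχ : Function.Injective χ)
    -- the ΛH_X-modules ρ_i ⊗_k X
    (Xρ : Fin r → Type) [∀ i, AddCommGroup (Xρ i)] [∀ i, Module B (Xρ i)]
    (hXρ : ∀ i, IsCharTwist ιB uB (χ i) X (Xρ i))
    (Y : Type) [AddCommGroup Y] [Module B Y]
    (hY : Nonempty (Res ιB Y ≃ₗ[Λ] X)) :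
    ∃! i : Fin r, Nonempty (Y ≃ₗ[B] Xρ i) :=
  HX_module_structures_on_X_general k Λ G hchar φ X hX H B ιB uB hB hBX r hr χ hχ Xρ hXρ Y hY
end

section
/- Assume Condition C. Then ΛG ⊗_Λ X ≅ ⊕_{i=1}^{r} ΛG ⊗_{ΛH_X} (ρ_i ⊗_k X) as ΛG-modules. -/
section AuxOrth

lemma my_smul_algebraMap_comm {k A T : Type} [CommSemiring k] [Ring A] [Algebra k A]
    [AddCommGroup T] [Module A T] (c : k) (b : A) (t : T) :
    b • (algebraMap k A c • t) = algebraMap k A c • (b • t) := by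
  rw [← mul_smul, ← Algebra.commutes, mul_smul]

lemma my_row_orth {k : Type} [Field k] {H : Type} [Group H] [Fintype H]
    (ψ : H →* kˣ) (hψ : ψ ≠ 1) : ∑ h : H, ((ψ h : kˣ) : k) = 0 := by
  have := sum_hom_units_eq_zero ((Units.coeHom k).comp ψ) (by
    intro hc
    apply hψ
    ext h
    have := congrArg (fun f => f h) hc
    simp only [MonoidHom.comp_apply, Units.coeHom_apply, MonoidHom.one_apply] at this ⊢
    simpa using this)
  simpa using this

lemma my_col_orth {k : Type} [Field k] {H : Type} [Group H] [Fintype H] {r : ℕ}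
    (hcard : Fintype.card H = r) (hru : (r : k) ≠ 0)
    (χ : Fin r → (H →* kˣ)) (hχ : Function.Injective χ) {h : H} (hh : h ≠ 1) :
    ∑ i : Fin r, (((χ i h)⁻¹ : kˣ) : k) = 0 := by
  classical
  let σ : H ≃ Fin r := Fintype.equivFinOfCardEq hcard
  let T : Matrix (Fin r) (Fin r) k := Matrix.of fun i m => ((χ i (σ.symm m) : kˣ) : k)
  let T₂ : Matrix (Fin r) (Fin r) k := Matrix.of fun m i => (((χ i (σ.symm m))⁻¹ : kˣ) : k)
  have hrow : ∀ i jj : Fin r, ∑ h' : H, ((χ i h' : kˣ) : k) * (((χ jj h')⁻¹ : kˣ) : k)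
      = if i = jj then (r : k) else 0 := by
    intro i jj
    by_cases hij : i = jj
    · subst hij
      simp only [if_pos rfl]
      have : ∀ h' : H, ((χ i h' : kˣ) : k) * (((χ i h')⁻¹ : kˣ) : k) = 1 := by
        intro h'
        rw [← Units.val_mul, mul_inv_cancel, Units.val_one]
      rw [Finset.sum_congr rfl fun h' _ => this h']
      simp [hcard]
    · rw [if_neg hij]
      have hne : χ i * (χ jj)⁻¹ ≠ 1 := by
        intro hc
        exact hij (hχ (mul_inv_eq_one.mp hc))
      have := my_row_orth (χ i * (χ jj)⁻¹) hne
      rw [← this]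
      refine Finset.sum_congr rfl fun h' _ => ?_
      simp [Units.val_mul]
  have hTT₂ : T * T₂ = (r : k) • 1 := by
    ext i jj
    simp only [Matrix.mul_apply, Matrix.smul_apply, Matrix.one_apply, T, T₂, Matrix.of_apply,
      smul_eq_mul]
    rw [Equiv.sum_comp σ.symm (fun h' => ((χ i h' : kˣ) : k) * (((χ jj h')⁻¹ : kˣ) : k)),
      hrow i jj]
    split <;> simp
  have h1 : T * ((r : k)⁻¹ • T₂) = 1 := by
    rw [Matrix.mul_smul, hTT₂, smul_smul, inv_mul_cancel₀ hru, one_smul]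
  have h2 : ((r : k)⁻¹ • T₂) * T = 1 := mul_eq_one_comm.mp h1
  have h3 : T₂ * T = (r : k) • 1 := by
    have := congrArg (fun MM => (r : k) • MM) h2
    simpa [Matrix.smul_mul, smul_smul, mul_inv_cancel₀ hru] using this
  have h4 := congrFun (congrFun h3 (σ h)) (σ 1)
  simp only [Matrix.mul_apply, Matrix.smul_apply, Matrix.one_apply, T, T₂, Matrix.of_apply,
    Equiv.symm_apply_apply, smul_eq_mul] at h4
  rw [if_neg (fun hc => hh (σ.injective hc))] at h4
  simpa using h4

end AuxOrth

/-- **Lemma 2.6(4).** Assume Condition C.  Then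
`ΛG ⊗_Λ X ≅ ⊕_{i=1}^{r} ΛG ⊗_{ΛH_X} (ρ_i ⊗_k X)` as `ΛG`-modules. -/
theorem induced_module_iso_sum_of_induced_charTwists
    (k Λ G : Type) [Field k] [IsAlgClosed k] [Ring Λ] [Algebra k Λ]
    [Group G] [Fintype G] (hchar : (Fintype.card G : k) ≠ 0)
    (φ : G →* (Λ ≃ₐ[k] Λ))
    -- the skew group algebra ΛG
    (A : Type) [Ring A] [Algebra k A] (ιA : Λ →ₐ[k] A) (uA : G →* Aˣ)
    (hA : IsSkewGroupAlgebra φ A ιA uA)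
    -- Condition C : X is a finite dimensional indecomposable Λ-module with H_X abelian
    (X : Type) [AddCommGroup X] [Module Λ X] [Module k X] [IsScalarTower k Λ X]
    [FiniteDimensional k X] (hX : IsIndec Λ X)
    (H : Subgroup G) (hH : (H : Set G) = Hset φ X)
    (hab : ∀ a b : H, a * b = b * a)
    -- the skew group algebra ΛH_X
    (B : Type) [Ring B] [Algebra k B] (ιB : Λ →ₐ[k] B) (uB : H →* Bˣ)
    (hB : IsSkewGroupAlgebra (φ.comp H.subtype) B ιB uB)
    -- ΛH_X ⊆ ΛG
    (j : B →ₐ[k] A) (hjι : ∀ a : Λ, j (ιB a) = ιA a) (hju : ∀ h : H, j (uB h) = uA h)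
    -- the ΛH_X-module structure on X (extending its Λ-module structure)
    [Module B X] (hBX : ∀ (a : Λ) (x : X), ιB a • x = a • x)
    -- the r = |H_X| pairwise distinct characters of H_X
    (r : ℕ) (hr : r = Nat.card H)
    (χ : Fin r → (H →* kˣ)) (hχ : Function.Injective χ)
    -- the ΛH_X-modules ρ_i ⊗_k X
    (Xρ : Fin r → Type) [∀ i, AddCommGroup (Xρ i)] [∀ i, Module B (Xρ i)]
    (hXρ : ∀ i, IsCharTwist ιB uB (χ i) X (Xρ i))
    -- the induced ΛG-modules M i = ΛG ⊗_{ΛH_X} (ρ_i ⊗_k X)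
    (M : Fin r → Type) [∀ i, AddCommGroup (M i)] [∀ i, Module A (M i)]
    (θ : ∀ i, Xρ i →+ M i)
    (hM : ∀ i, IsInducedAlong j.toRingHom (Xρ i) (M i) (θ i))
    (N : Type) [AddCommGroup N] [Module A N] (θN : X →+ N)
    (hN : IsInducedAlong ιA.toRingHom X N θN) :
    Nonempty (N ≃ₗ[A] ∀ i, M i) := by
  classical
  letI : Fintype H := Fintype.ofFinite H
  have hcard : Fintype.card H = r := by rw [hr, Nat.card_eq_fintype_card]
  have hrk : (r : k) ≠ 0 := by
    obtain ⟨m, hm⟩ : r ∣ Fintype.card G := by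
      rw [hr, ← Nat.card_eq_fintype_card (α := G)]
      exact Subgroup.card_subgroup_dvd_card H
    intro h0
    exact hchar (by rw [hm]; push_cast; rw [h0, zero_mul])
  obtain ⟨e, he1, he2⟩ : ∃ e : ∀ i, Xρ i ≃+ X,
      (∀ i (a : Λ) (x : Xρ i), e i (ιB a • x) = ιB a • e i x) ∧
      (∀ i (h : H) (x : Xρ i), e i ((uB h : B) • x)
          = algebraMap k B ((χ i h : kˣ) : k) • ((uB h : B) • e i x)) := by
    choose e h1 h2 using hXρ
    exact ⟨e, h1, fun i h x => by simpa [Units.smul_def] using h2 i h x⟩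
  have hφinv : ∀ (g : H) (a : Λ), φ (g : G) (φ (((g⁻¹ : H) : G)) a) = a := by
    intro g a
    rw [← AlgEquiv.mul_apply, ← map_mul]
    have h1 : ((g : G) * ((g⁻¹ : H) : G)) = 1 := by simp
    rw [h1, map_one]
    rfl
  have hθNs : ∀ (a : Λ) (x : X), θN (a • x) = ιA a • θN x := hN.semilinear
  have hθNk : ∀ (c : k) (x : X), θN (algebraMap k B c • x) = algebraMap k A c • θN x := by
    intro c x
    rw [← ιB.commutes c, hBX, hθNs, ιA.commutes c]
  have hθs : ∀ i (b : B) (y : Xρ i), θ i (b • y) = j b • θ i y := fun i => (hM i).semilinear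
  have hθk : ∀ i (c : k) (y : Xρ i),
      θ i (algebraMap k B c • y) = algebraMap k A c • θ i y := by
    intro i c y
    rw [hθs, j.commutes c]
  have hek : ∀ i (c : k) (z : Xρ i),
      e i (algebraMap k B c • z) = algebraMap k B c • e i z := by
    intro i c z
    rw [← ιB.commutes c, he1]
  have hesymmΛ : ∀ i (a : Λ) (w : X), (e i).symm (a • w) = ιB a • (e i).symm w := by
    intro i a w
    apply (e i).injective
    rw [AddEquiv.apply_symm_apply, he1, AddEquiv.apply_symm_apply, hBX]
  have hesymmU : ∀ i (g : H) (w : X), (e i).symm ((uB g : B) • w)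
      = algebraMap k B (((χ i g)⁻¹ : kˣ) : k) • ((uB g : B) • (e i).symm w) := by
    intro i g w
    apply (e i).injective
    rw [AddEquiv.apply_symm_apply, hek, he2, AddEquiv.apply_symm_apply, smul_smul,
      ← map_mul, ← Units.val_mul, inv_mul_cancel, Units.val_one, map_one, one_smul]
  have hskewB : ∀ (g : H) (a : Λ) (y : X),
      (uB g : B) • (ιB a • y) = ιB (φ (g : G) a) • ((uB g : B) • y) := by
    intro g a y
    rw [← mul_smul, hB.skew_comm g a, mul_smul]
    rfl
  have hskewA : ∀ (g : G) (a : Λ) (n : N),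
      (uA g : A) • (ιA a • n) = ιA (φ g a) • ((uA g : A) • n) := by
    intro g a n
    rw [← mul_smul, hA.skew_comm g a, mul_smul]
  -- construction of the maps `Gm i : M i →ₗ[A] N`
  have exGm : ∀ i, ∃ Gm : M i →ₗ[A] N, ∀ x' : Xρ i,
      Gm (θ i x') = ∑ h : H, algebraMap k A (((χ i h)⁻¹ : kˣ) : k) •
        ((uA (h : G) : A) • θN ((uB h⁻¹ : B) • e i x')) := by
    intro i
    have gadd : ∀ x y : Xρ i,
        (∑ h : H, algebraMap k A (((χ i h)⁻¹ : kˣ) : k) •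
          ((uA (h : G) : A) • θN ((uB h⁻¹ : B) • e i (x + y))))
        = (∑ h : H, algebraMap k A (((χ i h)⁻¹ : kˣ) : k) •
            ((uA (h : G) : A) • θN ((uB h⁻¹ : B) • e i x)))
          + ∑ h : H, algebraMap k A (((χ i h)⁻¹ : kˣ) : k) •
              ((uA (h : G) : A) • θN ((uB h⁻¹ : B) • e i y)) := by
      intro x y
      simp only [map_add, smul_add, Finset.sum_add_distrib]
    set gH : Xρ i →+ N := AddMonoidHom.mk' (fun x' =>
      ∑ h : H, algebraMap k A (((χ i h)⁻¹ : kˣ) : k) •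
        ((uA (h : G) : A) • θN ((uB h⁻¹ : B) • e i x'))) gadd with hgH
    have gHapp : ∀ x' : Xρ i, gH x' = ∑ h : H, algebraMap k A (((χ i h)⁻¹ : kˣ) : k) •
        ((uA (h : G) : A) • θN ((uB h⁻¹ : B) • e i x')) := fun _ => rfl
    have gΛ : ∀ (a : Λ) (x' : Xρ i), gH (ιB a • x') = ιA a • gH x' := by
      intro a x'
      rw [gHapp, gHapp, Finset.smul_sum]
      refine Finset.sum_congr rfl fun h _ => ?_
      rw [he1, hskewB, hBX, hθNs, hskewA, hφinv, my_smul_algebraMap_comm]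
    have gU : ∀ (h₀ : H) (x' : Xρ i),
        gH ((uB h₀ : B) • x') = (uA ((h₀ : H) : G) : A) • gH x' := by
      intro h₀ x'
      rw [gHapp, gHapp, Finset.smul_sum]
      refine (Fintype.sum_equiv (Equiv.mulLeft h₀) _ _ fun h' => ?_).symm
      simp only [Equiv.coe_mulLeft]
      rw [he2 i h₀ x']
      conv_rhs => rw [my_smul_algebraMap_comm, ← mul_smul ((uB (h₀ * h')⁻¹ : B))
        ((uB h₀ : B)), ← Units.val_mul, ← map_mul,
        show (h₀ * h')⁻¹ * h₀ = h'⁻¹ by group, hθNk,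
        my_smul_algebraMap_comm, smul_smul, ← map_mul,
        show (((χ i (h₀ * h'))⁻¹ : kˣ) : k) * ((χ i h₀ : kˣ) : k)
            = (((χ i h')⁻¹ : kˣ) : k) by
          rw [← Units.val_mul]; congr 1; rw [map_mul]; group,
        show (((h₀ * h' : H) : G)) = (h₀ : G) * (h' : G) from rfl,
        map_mul, Units.val_mul, mul_smul]
      rw [my_smul_algebraMap_comm]
    have glin : ∀ (b : B) (x' : Xρ i), gH (b • x') = j b • gH x' := by
      intro b x'
      obtain ⟨c, hc, -⟩ := hB.free b
      rw [hc, Finsupp.sum, Finset.sum_smul]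
      rw [map_sum gH _ c.support]
      have : ∀ g ∈ c.support, gH (((uB g : B) * ιB (c g)) • x')
          = ((uA (g : G) : A) * ιA (c g)) • gH x' := by
        intro g _
        rw [mul_smul, gU, gΛ, ← mul_smul]
      rw [Finset.sum_congr rfl this, map_sum j _ c.support, Finset.sum_smul]
      refine Finset.sum_congr rfl fun g _ => ?_
      rw [map_mul, hju, hjι]
    obtain ⟨Gm, hGm, -⟩ := (hM i).universal N gH glin
    exact ⟨Gm, fun x' => (hGm x').trans (gHapp x')⟩
  choose Gm hGm using exGm
  -- construction of the map `F : N →ₗ[A] ∀ i, M i`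
  have exF : ∃ F : N →ₗ[A] (∀ i, M i), ∀ (x : X) (i : Fin r),
      F (θN x) i = algebraMap k A ((r : k)⁻¹) • θ i ((e i).symm x) := by
    have fadd : ∀ x y : X,
        (fun i => algebraMap k A ((r : k)⁻¹) • θ i ((e i).symm (x + y)))
        = (fun i => algebraMap k A ((r : k)⁻¹) • θ i ((e i).symm x))
          + fun i => algebraMap k A ((r : k)⁻¹) • θ i ((e i).symm y) := by
      intro x y
      funext i
      simp only [Pi.add_apply, map_add, smul_add]
    set fH : X →+ (∀ i, M i) := AddMonoidHom.mk' (fun x =>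
      fun i => algebraMap k A ((r : k)⁻¹) • θ i ((e i).symm x)) fadd with hfH
    have flin : ∀ (a : Λ) (x : X), fH (a • x) = ιA a • fH x := by
      intro a x
      funext i
      show algebraMap k A ((r : k)⁻¹) • θ i ((e i).symm (a • x))
        = (ιA a • fH x) i
      rw [hesymmΛ, hθs, hjι, ← my_smul_algebraMap_comm]
      rfl
    obtain ⟨F, hF, -⟩ := hN.universal (∀ i, M i) fH flin
    exact ⟨F, fun x i => congrFun (hF x) i⟩
  obtain ⟨F, hF⟩ := exF
  -- the map back
  set GG : (∀ i, M i) →ₗ[A] N := ∑ i, (Gm i).comp (LinearMap.proj i) with hGG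
  have hGGapp : ∀ m : ∀ i, M i, GG m = ∑ i, Gm i (m i) := by
    intro m
    rw [hGG, LinearMap.sum_apply]
    exact Finset.sum_congr rfl fun i _ => rfl
  -- first composite
  have comp1 : GG.comp F = LinearMap.id := by
    obtain ⟨Fid, hFid, hFuniq⟩ := hN.universal N θN hN.semilinear
    refine (hFuniq (GG.comp F) ?_).trans (hFuniq LinearMap.id fun x => rfl).symm
    intro x
    rw [LinearMap.comp_apply, hGGapp]
    have step1 : ∀ i : Fin r, Gm i (F (θN x) i)
        = algebraMap k A ((r : k)⁻¹) • ∑ h : H, algebraMap k A (((χ i h)⁻¹ : kˣ) : k) •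
            ((uA (h : G) : A) • θN ((uB h⁻¹ : B) • x)) := by
      intro i
      rw [hF, map_smul, hGm]
      simp only [AddEquiv.apply_symm_apply]
    rw [Finset.sum_congr rfl fun i _ => step1 i, ← Finset.smul_sum, Finset.sum_comm]
    have step2 : ∀ h : H,
        (∑ i : Fin r, algebraMap k A (((χ i h)⁻¹ : kˣ) : k) •
          ((uA (h : G) : A) • θN ((uB h⁻¹ : B) • x)))
        = algebraMap k A (∑ i : Fin r, (((χ i h)⁻¹ : kˣ) : k)) •
            ((uA (h : G) : A) • θN ((uB h⁻¹ : B) • x)) := by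
      intro h
      rw [map_sum, Finset.sum_smul]
    rw [Finset.sum_congr rfl fun h _ => step2 h]
    rw [Fintype.sum_eq_single (1 : H) (fun h hne => by
      rw [my_col_orth hcard hrk χ hχ hne, map_zero, zero_smul])]
    have hval : (∑ i : Fin r, (((χ i 1)⁻¹ : kˣ) : k)) = (r : k) := by
      have : ∀ i : Fin r, (((χ i 1)⁻¹ : kˣ) : k) = 1 := by
        intro i; rw [map_one, inv_one, Units.val_one]
      rw [Finset.sum_congr rfl fun i _ => this i]
      simp
    rw [hval]
    have hone : ((uB (1 : H)⁻¹ : B)) • x = x := by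
      rw [inv_one, map_one, Units.val_one, one_smul]
    rw [hone, show (((1 : H) : G)) = (1 : G) from rfl, map_one, Units.val_one, one_smul,
      smul_smul, ← map_mul, inv_mul_cancel₀ hrk, map_one, one_smul]
  -- second composite
  have comp2 : F.comp GG = LinearMap.id := by
    have hsingle : ∀ i : Fin r, F.comp (Gm i) = LinearMap.single A M i := by
      intro i
      have hsemi : ∀ (b : B) (x' : Xρ i),
          ((LinearMap.single A M i).toAddMonoidHom.comp (θ i)) (b • x')
          = j b • ((LinearMap.single A M i).toAddMonoidHom.comp (θ i)) x' := by
        intro b x'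
        simp only [AddMonoidHom.comp_apply, LinearMap.toAddMonoidHom_coe]
        rw [hθs, map_smul]
      obtain ⟨S, hS, hSuniq⟩ := (hM i).universal (∀ l, M l)
        ((LinearMap.single A M i).toAddMonoidHom.comp (θ i)) hsemi
      refine (hSuniq (F.comp (Gm i)) ?_).trans (hSuniq (LinearMap.single A M i)
        fun x' => rfl).symm
      intro x'
      rw [LinearMap.comp_apply, hGm, map_sum]
      simp only [AddMonoidHom.comp_apply, LinearMap.toAddMonoidHom_coe, map_smul,
        LinearMap.coe_single]
      funext l
      rw [Finset.sum_apply]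
      have hterm : ∀ h : H,
          ((algebraMap k A (((χ i h)⁻¹ : kˣ) : k) •
            ((uA (h : G) : A) • F (θN ((uB h⁻¹ : B) • e i x')))) l)
          = (algebraMap k A ((r : k)⁻¹ * ((((χ i h)⁻¹ : kˣ) : k) * ((χ l h : kˣ) : k)))) •
              θ l ((e l).symm (e i x')) := by
        intro h
        have hFcomp : F (θN ((uB h⁻¹ : B) • e i x')) l
            = algebraMap k A ((r : k)⁻¹) •
              (algebraMap k A (((χ l h⁻¹)⁻¹ : kˣ) : k) •
                ((uA ((h⁻¹ : H) : G) : A) • θ l ((e l).symm (e i x')))) := by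
          rw [hF, hesymmU, hθk, hθs, hju]
        simp only [Pi.smul_apply]
        rw [hFcomp]
        rw [show (((h⁻¹ : H) : G)) = ((h : G))⁻¹ from rfl, map_inv uA ((h : H) : G)]
        rw [my_smul_algebraMap_comm _ ((uA ((h : H) : G) : A)),
          my_smul_algebraMap_comm _ ((uA ((h : H) : G) : A)),
          ← mul_smul ((uA ((h : H) : G) : A)) ((((uA ((h : H) : G))⁻¹ : Aˣ) : A)),
          ← Units.val_mul, mul_inv_cancel, Units.val_one, one_smul,
          smul_smul, ← map_mul, smul_smul, ← map_mul]
        congr 1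
        rw [show (((χ l h⁻¹)⁻¹ : kˣ) : k) = ((χ l h : kˣ) : k) by
          rw [map_inv, inv_inv]]
        refine congrArg (algebraMap k A) ?_
        push_cast
        ring
      rw [Finset.sum_congr rfl fun h _ => hterm h, ← Finset.sum_smul, ← map_sum,
        ← Finset.mul_sum]
      by_cases hli : l = i
      · subst hli
        have : (∑ h : H, ((((χ l h)⁻¹ : kˣ) : k) * ((χ l h : kˣ) : k))) = (r : k) := by
          have h1 : ∀ h : H, ((((χ l h)⁻¹ : kˣ) : k) * ((χ l h : kˣ) : k)) = 1 := by
            intro h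
            rw [← Units.val_mul, inv_mul_cancel, Units.val_one]
          rw [Finset.sum_congr rfl fun h _ => h1 h]
          simp [hcard]
        rw [this, inv_mul_cancel₀ hrk, map_one, one_smul, AddEquiv.symm_apply_apply,
          Pi.single_eq_same]
      · have hne : χ l * (χ i)⁻¹ ≠ 1 := by
          intro hc
          exact hli (hχ (mul_inv_eq_one.mp hc))
        have : (∑ h : H, ((((χ i h)⁻¹ : kˣ) : k) * ((χ l h : kˣ) : k))) = 0 := by
          have := my_row_orth (χ l * (χ i)⁻¹) hne
          rw [← this]
          refine Finset.sum_congr rfl fun h _ => ?_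
          simp [Units.val_mul, mul_comm]
        rw [this, mul_zero, map_zero, zero_smul, Pi.single_eq_of_ne hli]
    refine LinearMap.ext fun m => ?_
    rw [LinearMap.comp_apply, hGGapp, map_sum]
    have : ∀ i ∈ Finset.univ, F (Gm i (m i)) = Pi.single i (m i) := by
      intro i _
      rw [← LinearMap.comp_apply, hsingle]
      rfl
    rw [Finset.sum_congr rfl this, LinearMap.id_apply, Finset.univ_sum_single]
  exact ⟨LinearEquiv.ofLinear F GG comp2 comp1⟩
end
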